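/- arXiv:1507.01817 — 9 statements merged into one kernel-verified Lean document; each statement's English description precedes it below -/
import Mathlib

section
/- Let p > 0 and for ε > 0 define the Green function G_{1,ε}(t,s) = -e^{-ε√p|t-s|}·(1-e^{-2ε√p·min(t,s)})·(1-e^{-2ε√p·(1-max(t,s))}) / (2ε√p·(1-e^{-2ε√p})) on [0,1]×[0,1], and let Υ(t,s) = -min(t,s)·(1-max(t,s)). Then sup_{t,s ∈ [0,1]} |G_{1,ε}(t,s) - Υ(t,s)| → 0 as ε → 0⁺. -/
/-!
Write `c = ε √p`, `m = min t s`, `M = 1 - max t s`. The elementary bounds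
`x / (1 + x) ≤ 1 - e^{-x} ≤ x` (for `x ≥ 0`), applied to each factor of `-G_{1,ε}`,
squeeze it between `m M e^{-c} / (1 + 2c)²` and `m M (1 + 2c)`; since `0 ≤ m M ≤ 1` this gives
`|G_{1,ε} - Υ| ≤ 5 ε √p` uniformly on the square.
-/

open Filter Set Real

theorem Real.div_one_add_le_one_sub_exp_neg {x : ℝ} (hx : 0 ≤ x) :
    x / (1 + x) ≤ 1 - exp (-x) := by
  have hpos : 0 < 1 + x := by linarith
  have h : exp (-x) ≤ 1 / (1 + x) := by
    rw [exp_neg, ← one_div]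
    exact one_div_le_one_div_of_le hpos (by linarith [add_one_le_exp x])
  calc x / (1 + x) = 1 - 1 / (1 + x) := by field_simp; ring
    _ ≤ 1 - exp (-x) := by linarith

theorem Real.one_sub_exp_neg_nonneg {x : ℝ} (hx : 0 ≤ x) : 0 ≤ 1 - exp (-x) :=
  (div_nonneg hx (by linarith)).trans (div_one_add_le_one_sub_exp_neg hx)

/-- `-G_{1,ε}(t, s)` for `c = ε √p`, `m = min t s`, `M = 1 - max t s` and `d = |t - s|`. -/
noncomputable def negGreen (c m M d : ℝ) : ℝ :=
  exp (-(c * d)) * (1 - exp (-(2 * c * m))) * (1 - exp (-(2 * c * M))) /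
    (2 * c * (1 - exp (-(2 * c))))

variable {c m M d : ℝ}

theorem negGreen_le (hc : 0 < c) (hm : 0 ≤ m) (hM : 0 ≤ M) (hd : 0 ≤ d) :
    negGreen c m M d ≤ m * M * (1 + 2 * c) := by
  have hE : exp (-(c * d)) ≤ 1 := exp_le_one_iff.2 (by nlinarith)
  have hu0 := one_sub_exp_neg_nonneg (by positivity : 0 ≤ 2 * c * m)
  have hv0 := one_sub_exp_neg_nonneg (by positivity : 0 ≤ 2 * c * M)
  have hu : 1 - exp (-(2 * c * m)) ≤ 2 * c * m := by linarith [one_sub_le_exp_neg (2 * c * m)]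
  have hv : 1 - exp (-(2 * c * M)) ≤ 2 * c * M := by linarith [one_sub_le_exp_neg (2 * c * M)]
  have hw : 2 * c / (1 + 2 * c) ≤ 1 - exp (-(2 * c)) :=
    div_one_add_le_one_sub_exp_neg (by positivity)
  calc negGreen c m M d ≤ 1 * (2 * c * m) * (2 * c * M) / (2 * c * (2 * c / (1 + 2 * c))) := by
        unfold negGreen
        gcongr
    _ = m * M * (1 + 2 * c) := by field_simp

theorem le_negGreen (hc : 0 < c) (hm : 0 ≤ m) (hm1 : m ≤ 1) (hM : 0 ≤ M) (hM1 : M ≤ 1)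
    (hd1 : d ≤ 1) :
    m * M * exp (-c) / (1 + 2 * c) ^ 2 ≤ negGreen c m M d := by
  have hE : exp (-c) ≤ exp (-(c * d)) := exp_le_exp.2 (by nlinarith)
  have hu0 := one_sub_exp_neg_nonneg (by positivity : 0 ≤ 2 * c * m)
  have hv0 := one_sub_exp_neg_nonneg (by positivity : 0 ≤ 2 * c * M)
  have hu : 2 * c * m / (1 + 2 * c) ≤ 1 - exp (-(2 * c * m)) :=
    (div_le_div_of_nonneg_left (by positivity) (by positivity) (by nlinarith)).trans
      (div_one_add_le_one_sub_exp_neg (by positivity))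
  have hv : 2 * c * M / (1 + 2 * c) ≤ 1 - exp (-(2 * c * M)) :=
    (div_le_div_of_nonneg_left (by positivity) (by positivity) (by nlinarith)).trans
      (div_one_add_le_one_sub_exp_neg (by positivity))
  have hw : 1 - exp (-(2 * c)) ≤ 2 * c := by linarith [one_sub_le_exp_neg (2 * c)]
  have hw0 : 0 < 1 - exp (-(2 * c)) := by
    linarith [exp_lt_one_iff.2 (by linarith : -(2 * c) < 0)]
  calc m * M * exp (-c) / (1 + 2 * c) ^ 2
      = exp (-c) * (2 * c * m / (1 + 2 * c)) * (2 * c * M / (1 + 2 * c)) / (2 * c * (2 * c)) := by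
        field_simp
    _ ≤ negGreen c m M d := by
        unfold negGreen
        gcongr

theorem abs_sub_le_of_mul_bounds {x r c : ℝ} (hc : 0 ≤ c) (hx0 : 0 ≤ x) (hx1 : x ≤ 1)
    (hlo : x * exp (-c) / (1 + 2 * c) ^ 2 ≤ r) (hhi : r ≤ x * (1 + 2 * c)) :
    |r - x| ≤ 5 * c := by
  rw [div_le_iff₀ (by positivity)] at hlo
  have hexp := mul_le_mul_of_nonneg_left (one_sub_le_exp_neg c) hx0
  rw [abs_le]
  constructor
  · -- `e^{-c} ≥ 1 - c` gives `(1 + 2c)² - e^{-c} ≤ 5c + 4c² ≤ 5c (1 + 2c)²`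
    by_contra! h
    have := mul_lt_mul_of_pos_right h (by positivity : (0:ℝ) < (1 + 2 * c) ^ 2)
    nlinarith [mul_nonneg (mul_nonneg hc hc) (sub_nonneg.2 hx1), mul_nonneg hc (sub_nonneg.2 hx1),
      pow_nonneg hc 3]
  · nlinarith

theorem abs_negGreen_sub_le {t s : ℝ} (hc : 0 < c) (ht : t ∈ Icc (0 : ℝ) 1)
    (hs : s ∈ Icc (0 : ℝ) 1) :
    |negGreen c (min t s) (1 - max t s) |t - s| - min t s * (1 - max t s)| ≤ 5 * c := by
  obtain ⟨ht0, ht1⟩ := ht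
  obtain ⟨hs0, hs1⟩ := hs
  have hm : 0 ≤ min t s := le_min ht0 hs0
  have hm1 : min t s ≤ 1 := (min_le_left t s).trans ht1
  have hM : 0 ≤ 1 - max t s := sub_nonneg.2 (max_le ht1 hs1)
  have hM1 : 1 - max t s ≤ 1 := by linarith [le_max_left t s]
  have hd1 : |t - s| ≤ 1 := abs_sub_le_iff.2 ⟨by linarith, by linarith⟩
  exact abs_sub_le_of_mul_bounds hc.le (mul_nonneg hm hM) (mul_le_one₀ hm1 hM hM1)
    (le_negGreen hc hm hm1 hM hM1 hd1) (negGreen_le hc hm hM (abs_nonneg _))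

/-- uniform convergence of the Dirichlet Green function `G_{1,ε}`
to `Υ(t,s) = -min(t,s)(1-max(t,s))` on `[0,1]×[0,1]` as `ε → 0⁺`. -/
theorem green_dirichlet_uniform_limit (p : ℝ) (hp : 0 < p) :
    Tendsto
      (fun ε : ℝ =>
        ⨆ t : Set.Icc (0:ℝ) 1, ⨆ s : Set.Icc (0:ℝ) 1,
          |(-(Real.exp (-(ε * Real.sqrt p * |(t:ℝ) - s|)) *
              (1 - Real.exp (-(2 * ε * Real.sqrt p * min (t:ℝ) s))) *
              (1 - Real.exp (-(2 * ε * Real.sqrt p * (1 - max (t:ℝ) s))))) /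
            (2 * ε * Real.sqrt p * (1 - Real.exp (-(2 * ε * Real.sqrt p)))))
            - (-(min (t:ℝ) s * (1 - max (t:ℝ) s)))|)
      (nhdsWithin 0 (Set.Ioi 0)) (nhds 0) := by
  have hbound : Tendsto (fun ε : ℝ => 5 * (ε * √p)) (nhdsWithin 0 (Ioi 0)) (nhds 0) :=
    tendsto_nhdsWithin_of_tendsto_nhds <|
      (by fun_prop : Continuous fun ε : ℝ => 5 * (ε * √p)).tendsto' 0 0 (by simp)
  refine squeeze_zero' (Eventually.of_forall fun ε =>
    Real.iSup_nonneg fun t => Real.iSup_nonneg fun s => abs_nonneg _) ?_ hbound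
  filter_upwards [self_mem_nhdsWithin] with ε hε
  have hc : 0 < ε * √p := mul_pos hε (sqrt_pos.2 hp)
  refine Real.iSup_le (fun t => Real.iSup_le (fun s => ?_) (by positivity)) (by positivity)
  rw [mul_assoc 2 ε, neg_div, neg_sub_neg, abs_sub_comm]
  exact abs_negGreen_sub_le hc t.2 s.2
end

section
/- Let p > 0 and for ε > 0 define G_{1,ε}(t,s) = -e^{-ε√p|t-s|}·(1-e^{-2ε√p·min(t,s)})·(1-e^{-2ε√p·(1-max(t,s))}) / (2ε√p·(1-e^{-2ε√p})) on [0,1]×[0,1], and Υ(t,s) = -min(t,s)·(1-max(t,s)). For each fixed s, both G_{1,ε}(·,s) and Υ(·,s) are differentiable in t at every t ≠ s, and sup_{t≠s, t,s ∈ [0,1]} |∂G_{1,ε}/∂t (t,s) - ∂Υ/∂t (t,s)| → 0 as ε → 0⁺. -/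
open Filter Set Real Topology

/-!
Write `a = ε √p`. For `t < s` the kernel is `-K (e^{a(t-s)} - e^{-a(t+s)})` near `t`, so its
`t`-derivative is `-r m` with `r = (1 - e^{-2a(1-s)}) / (1 - e^{-2a})` and
`m = (e^{a(t-s)} + e^{-a(t+s)}) / 2`. Since `x e^{-x} ≤ 1 - e^{-x} ≤ x`, the ratio `r` lies
between `(1-s) e^{-2a}` and `(1-s) e^{2a}`, while `e^{-2a} ≤ m ≤ 1`; hence `-r m` is within
`e^{4a} - 1` of `-(1-s) = ∂Υ/∂t`, uniformly in `t < s`. The case `s < t` follows from the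
symmetry `G(1-t, 1-s) = G(t, s)`, shared by `Υ`.
-/

noncomputable def greenDirichlet (a t s : ℝ) : ℝ :=
  -(exp (-(a * |t - s|)) * (1 - exp (-(2 * a * min t s))) * (1 - exp (-(2 * a * (1 - max t s))))) /
    (2 * a * (1 - exp (-(2 * a))))

def greenDirichletZero (t s : ℝ) : ℝ := -(min t s * (1 - max t s))

lemma mul_exp_neg_le_one_sub_exp_neg (x : ℝ) : x * exp (-x) ≤ 1 - exp (-x) := by
  have h : (1 + x) * exp (-x) ≤ exp x * exp (-x) :=
    mul_le_mul_of_nonneg_right (by linarith [add_one_le_exp x]) (exp_pos _).le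
  rw [← exp_add, add_neg_cancel, exp_zero] at h
  linarith

lemma one_sub_exp_neg_div_mem_Icc {a y : ℝ} (ha : 0 < a) (hy : 0 ≤ y) (hy1 : y ≤ 1) :
    (1 - exp (-(2 * a * y))) / (1 - exp (-(2 * a))) ∈
      Icc (y * exp (-(2 * a))) (y * exp (2 * a)) := by
  set q := exp (-(2 * a))
  have hq : q * exp (2 * a) = 1 := by rw [← exp_add, neg_add_cancel, exp_zero]
  have hden : 0 < 1 - q := by linarith [exp_lt_one_iff.2 (by linarith : -(2 * a) < 0)]
  have hmono : q ≤ exp (-(2 * a * y)) := exp_le_exp.2 (by nlinarith)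
  constructor
  · rw [le_div_iff₀ hden]
    calc y * q * (1 - q) ≤ y * q * (2 * a) := by
          gcongr
          linarith [one_sub_le_exp_neg (2 * a)]
      _ = 2 * a * y * q := by ring
      _ ≤ 2 * a * y * exp (-(2 * a * y)) := by gcongr
      _ ≤ 1 - exp (-(2 * a * y)) := mul_exp_neg_le_one_sub_exp_neg _
  · rw [div_le_iff₀ hden]
    calc 1 - exp (-(2 * a * y)) ≤ 2 * a * y := by linarith [one_sub_le_exp_neg (2 * a * y)]
      _ = y * exp (2 * a) * (2 * a * q) := by linear_combination (-2 * a * y) * hq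
      _ ≤ y * exp (2 * a) * (1 - q) := by
          gcongr
          exact mul_exp_neg_le_one_sub_exp_neg _

lemma abs_sub_le_exp_sub_one {b y z : ℝ} (hb : 0 ≤ b) (hy : 0 ≤ y) (hy1 : y ≤ 1)
    (hlo : y * exp (-b) ≤ z) (hhi : z ≤ y * exp b) : |y - z| ≤ exp b - 1 := by
  have h1 : 1 ≤ exp b := one_le_exp hb
  have h2 : 1 - exp (-b) ≤ exp b - 1 := by
    have : exp b * exp (-b) = 1 := by rw [← exp_add, add_neg_cancel, exp_zero]
    nlinarith [exp_pos (-b)]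
  rw [abs_le]
  constructor <;> nlinarith

lemma abs_sub_greenDirichlet_deriv_le {a t s : ℝ} (ha : 0 < a) (ht : 0 ≤ t) (hts : t ≤ s)
    (hs : s ≤ 1) :
    |(1 - s) - (1 - exp (-(2 * a * (1 - s)))) / (1 - exp (-(2 * a))) *
        ((exp (a * (t - s)) + exp (-(a * (t + s)))) / 2)| ≤ exp (4 * a) - 1 := by
  obtain ⟨hr_lo, hr_hi⟩ :=
    one_sub_exp_neg_div_mem_Icc ha (by linarith : 0 ≤ 1 - s) (by linarith)
  set r := (1 - exp (-(2 * a * (1 - s)))) / (1 - exp (-(2 * a)))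
  set m := (exp (a * (t - s)) + exp (-(a * (t + s)))) / 2 with hm
  have hm_lo : exp (-(2 * a)) ≤ m := by
    have h1 : exp (-(2 * a)) ≤ exp (a * (t - s)) := exp_le_exp.2 (by nlinarith)
    have h2 : exp (-(2 * a)) ≤ exp (-(a * (t + s))) := exp_le_exp.2 (by nlinarith)
    rw [hm]; linarith
  have hm_hi : m ≤ 1 := by
    have h1 : exp (a * (t - s)) ≤ 1 := exp_le_one_iff.2 (by nlinarith)
    have h2 : exp (-(a * (t + s))) ≤ 1 := exp_le_one_iff.2 (by nlinarith)
    rw [hm]; linarith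
  have hr_nonneg : 0 ≤ r := le_trans (by have := exp_pos (-(2 * a)); nlinarith) hr_lo
  apply abs_sub_le_exp_sub_one (by linarith) (by linarith) (by linarith)
  · calc (1 - s) * exp (-(4 * a)) = (1 - s) * exp (-(2 * a)) * exp (-(2 * a)) := by
          rw [mul_assoc, ← exp_add]; ring_nf
      _ ≤ r * m := mul_le_mul hr_lo hm_lo (exp_pos _).le hr_nonneg
  · calc r * m ≤ r := mul_le_of_le_one_right hr_nonneg hm_hi
      _ ≤ (1 - s) * exp (2 * a) := hr_hi
      _ ≤ (1 - s) * exp (4 * a) := by gcongr; linarith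

lemma greenDirichlet_one_sub (a t s : ℝ) :
    greenDirichlet a (1 - t) (1 - s) = greenDirichlet a t s := by
  rw [greenDirichlet, greenDirichlet, sub_sub_sub_cancel_left, abs_sub_comm, min_sub_sub_left,
    max_sub_sub_left, sub_sub_cancel]
  ring

lemma greenDirichletZero_one_sub (t s : ℝ) :
    greenDirichletZero (1 - t) (1 - s) = greenDirichletZero t s := by
  rw [greenDirichletZero, greenDirichletZero, min_sub_sub_left, max_sub_sub_left, sub_sub_cancel]
  ring

lemma HasDerivAt.of_one_sub_invariant {f : ℝ → ℝ → ℝ}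
    (hf : ∀ t s, f (1 - t) (1 - s) = f t s) {f' t s : ℝ}
    (h : HasDerivAt (fun u => f u (1 - s)) f' (1 - t)) :
    HasDerivAt (fun u => f u s) (-f') t := by
  simpa only [hf] using h.comp_const_sub 1 t

lemma hasDerivAt_greenDirichlet_of_lt {a t s : ℝ} (ha : a ≠ 0) (hts : t < s) :
    HasDerivAt (fun u => greenDirichlet a u s)
      (-((1 - exp (-(2 * a * (1 - s)))) / (1 - exp (-(2 * a))) *
        ((exp (a * (t - s)) + exp (-(a * (t + s)))) / 2))) t := by
  set K := (1 - exp (-(2 * a * (1 - s)))) / (2 * a * (1 - exp (-(2 * a))))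
  have hloc : (fun u => greenDirichlet a u s) =ᶠ[𝓝 t]
      fun u => -K * (exp (a * (u - s)) - exp (-(a * (u + s)))) := by
    filter_upwards [Iio_mem_nhds hts] with u hu
    have hexp : exp (-(a * |u - s|)) * (1 - exp (-(2 * a * u))) =
        exp (a * (u - s)) - exp (-(a * (u + s))) := by
      rw [abs_of_neg (sub_neg.2 hu), mul_one_sub, ← exp_add]
      ring_nf
    rw [greenDirichlet, min_eq_left hu.le, max_eq_right hu.le, hexp]
    ring
  have h₁ : HasDerivAt (fun u => a * (u - s)) a t := by
    simpa using ((hasDerivAt_id t).sub_const s).const_mul a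
  have h₂ : HasDerivAt (fun u => -(a * (u + s))) (-a) t := by
    simpa using (((hasDerivAt_id t).add_const s).const_mul a).fun_neg
  refine (((h₁.exp.sub h₂.exp).const_mul (-K)).congr_of_eventuallyEq hloc).congr_deriv ?_
  simp only [K]
  field_simp
  ring

lemma hasDerivAt_greenDirichletZero_of_lt {t s : ℝ} (hts : t < s) :
    HasDerivAt (fun u => greenDirichletZero u s) (-(1 - s)) t := by
  have hloc : (fun u => greenDirichletZero u s) =ᶠ[𝓝 t] fun u => -(1 - s) * u := by
    filter_upwards [Iio_mem_nhds hts] with u hu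
    rw [greenDirichletZero, min_eq_left hu.le, max_eq_right hu.le]
    ring
  simpa using ((hasDerivAt_id t).const_mul (-(1 - s))).congr_of_eventuallyEq hloc

theorem exists_hasDerivAt_greenDirichlet_sub_le {a t s : ℝ} (ha : 0 < a) (ht : t ∈ Icc 0 1)
    (hs : s ∈ Icc 0 1) (hts : t ≠ s) :
    ∃ g y, HasDerivAt (fun u => greenDirichlet a u s) g t ∧
      HasDerivAt (fun u => greenDirichletZero u s) y t ∧ |g - y| ≤ exp (4 * a) - 1 := by
  wlog hlt : t < s generalizing t s
  · obtain ⟨g, y, hg, hy, hgy⟩ := this (t := 1 - t) (s := 1 - s)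
      ⟨by linarith [ht.2], by linarith [ht.1]⟩ ⟨by linarith [hs.2], by linarith [hs.1]⟩
      (by contrapose! hts; linarith) (by linarith [lt_of_le_of_ne (not_lt.1 hlt) hts.symm])
    exact ⟨-g, -y, hg.of_one_sub_invariant (greenDirichlet_one_sub a),
      hy.of_one_sub_invariant greenDirichletZero_one_sub, by rwa [neg_sub_neg, abs_sub_comm]⟩
  refine ⟨_, _, hasDerivAt_greenDirichlet_of_lt ha.ne' hlt,
    hasDerivAt_greenDirichletZero_of_lt hlt, ?_⟩
  rw [neg_sub_neg]
  exact abs_sub_greenDirichlet_deriv_le ha ht.1 hlt.le hs.2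

/-- for each fixed `s`, the Dirichlet Green function `G_{1,ε}(·,s)`
and `Υ(·,s)` are differentiable in `t` at every `t ≠ s`, and the off-diagonal
uniform norm of the difference of the `t`-partial derivatives tends to `0` as
`ε → 0⁺`. -/
theorem green_dirichlet_derivative_uniform_limit (p : ℝ) (hp : 0 < p)
    (G : ℝ → ℝ → ℝ → ℝ)
    (hG : ∀ ε t s, G ε t s =
      -(Real.exp (-(ε * Real.sqrt p * |t - s|)) *
          (1 - Real.exp (-(2 * ε * Real.sqrt p * min t s))) *
          (1 - Real.exp (-(2 * ε * Real.sqrt p * (1 - max t s))))) /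
        (2 * ε * Real.sqrt p * (1 - Real.exp (-(2 * ε * Real.sqrt p)))))
    (Υ : ℝ → ℝ → ℝ)
    (hΥ : ∀ t s, Υ t s = -(min t s * (1 - max t s))) :
    (∀ ε : ℝ, 0 < ε → ∀ s ∈ Set.Icc (0:ℝ) 1, ∀ t ∈ Set.Icc (0:ℝ) 1, t ≠ s →
        DifferentiableAt ℝ (fun u => G ε u s) t ∧
        DifferentiableAt ℝ (fun u => Υ u s) t) ∧
    Tendsto
      (fun ε : ℝ =>
        sSup {r : ℝ | ∃ t ∈ Set.Icc (0:ℝ) 1, ∃ s ∈ Set.Icc (0:ℝ) 1, t ≠ s ∧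
          r = |deriv (fun u => G ε u s) t - deriv (fun u => Υ u s) t|})
      (nhdsWithin 0 (Set.Ioi 0)) (nhds 0) := by
  have hG' : ∀ ε, G ε = greenDirichlet (ε * √p) := by
    intro ε; funext t s; rw [hG, greenDirichlet]; simp only [mul_assoc]
  have hΥ' : Υ = greenDirichletZero := by
    funext t s; exact hΥ t s
  have hpos : ∀ ε : ℝ, 0 < ε → 0 < ε * √p := fun ε hε => mul_pos hε (sqrt_pos.2 hp)
  subst hΥ'
  simp only [hG']
  refine ⟨fun ε hε s hs t ht hts => ?_, ?_⟩
  · obtain ⟨g, y, hg, hy, -⟩ := exists_hasDerivAt_greenDirichlet_sub_le (hpos ε hε) ht hs hts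
    exact ⟨hg.differentiableAt, hy.differentiableAt⟩
  have hbound : Tendsto (fun ε : ℝ => exp (4 * (ε * √p)) - 1) (𝓝[>] 0) (𝓝 0) :=
    tendsto_nhdsWithin_of_tendsto_nhds <|
      (by fun_prop : Continuous fun ε : ℝ => exp (4 * (ε * √p)) - 1).tendsto' 0 0 (by simp)
  refine squeeze_zero' (Eventually.of_forall fun ε => Real.sSup_nonneg ?_) ?_ hbound
  · rintro r ⟨t, -, s, -, -, rfl⟩
    exact abs_nonneg _
  filter_upwards [self_mem_nhdsWithin] with ε hε
  refine Real.sSup_le ?_ (sub_nonneg.2 (one_le_exp (by linarith [hpos ε hε])))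
  rintro r ⟨t, ht, s, hs, hts, rfl⟩
  obtain ⟨g, y, hg, hy, hgy⟩ := exists_hasDerivAt_greenDirichlet_sub_le (hpos ε hε) ht hs hts
  rwa [hg.deriv, hy.deriv]
end

section
/- Let p > 0 and for ε > 0 define G_{2,ε}(t,s) = -e^{-ε√p|t-s|}·(1+e^{-2ε√p·min(t,s)})·(1+e^{-2ε√p·max(t,s)}) / (2ε√p·(1-e^{-2ε√p})) on [0,1]×[0,1]. Then sup_{t,s ∈ [0,1]} |ε²·G_{2,ε}(t,s) + 1/p| → 0 as ε → 0⁺. -/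
open Filter Set

private lemma aux_main (p ε q A X : ℝ) (hp : 0 < p) (hq : 0 < q)
    (hq2 : q * q = ε ^ 2 * p)
    (hA4 : A ≤ 4) (hAlb : 4 * Real.exp (-(3 * q)) ≤ A)
    (heX : Real.exp (q * 2) * X = 1)
    (hXub : 1 - X ≤ 2 * q) (hXlb : 2 * q * X ≤ 1 - X) :
    |ε ^ 2 * (-A / (q * 2 * (1 - X))) + 1 / p| ≤ (Real.exp (3 * q) - 1) / p := by
  have hXpos : 0 < X := by nlinarith [Real.exp_pos (q * 2)]
  have hden : 0 < 1 - X := lt_of_lt_of_le (by positivity) hXlb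
  have hDen : 0 < q * 2 * (1 - X) := by positivity
  have hq2A : ε ^ 2 * A * p = q * q * A := by linear_combination A * hq2.symm
  have hVub : ε ^ 2 * A / (q * 2 * (1 - X)) ≤ Real.exp (q * 2) / p := by
    rw [div_le_div_iff₀ hDen hp, hq2A]
    have h₁ := mul_le_mul_of_nonneg_left hXlb
      (show (0:ℝ) ≤ Real.exp (q * 2) * (2 * q) by positivity)
    have h₃ : Real.exp (q * 2) * (2 * q) * (2 * q * X) = 4 * (q * q) := by
      linear_combination (4 * q * q) * heX
    have h₂ : q * q * A ≤ q * q * 4 := mul_le_mul_of_nonneg_left hA4 (by positivity)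
    linarith [h₁, h₂, h₃]
  have hVlb : Real.exp (-(3 * q)) / p ≤ ε ^ 2 * A / (q * 2 * (1 - X)) := by
    rw [div_le_div_iff₀ hp hDen, hq2A]
    have h₁ := mul_le_mul_of_nonneg_left hXub
      (show (0:ℝ) ≤ Real.exp (-(3 * q)) * (q * 2) by positivity)
    have h₂ : (4 * Real.exp (-(3 * q))) * (q * q) ≤ A * (q * q) :=
      mul_le_mul_of_nonneg_right hAlb (by positivity)
    linarith [h₁, h₂]
  have hrw : ε ^ 2 * (-A / (q * 2 * (1 - X))) + 1 / p
      = 1 / p - ε ^ 2 * A / (q * 2 * (1 - X)) := by ring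
  rw [hrw]
  have he33 : Real.exp (3 * q) * Real.exp (-(3 * q)) = 1 := by
    rw [← Real.exp_add]; simp
  have hsum : 2 ≤ Real.exp (3 * q) + Real.exp (-(3 * q)) := by
    nlinarith [sq_nonneg (Real.exp (3 * q) - 1), he33, Real.exp_pos (3 * q)]
  have hmono : Real.exp (q * 2) ≤ Real.exp (3 * q) :=
    Real.exp_le_exp.mpr (by linarith)
  rw [abs_le]
  constructor
  · have h1 : Real.exp (q * 2) / p ≤ Real.exp (3 * q) / p := by gcongr
    have h2 : 1 / p + (Real.exp (3 * q) - 1) / p = Real.exp (3 * q) / p := by ring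
    linarith [hVub]
  · have h2 : (1:ℝ) / p - Real.exp (-(3 * q)) / p = (1 - Real.exp (-(3 * q))) / p := by ring
    have h3 : (1 - Real.exp (-(3 * q))) / p ≤ (Real.exp (3 * q) - 1) / p := by
      gcongr ?_ / p
      linarith
    linarith [hVlb]

private lemma green_pointwise (p : ℝ) (hp : 0 < p) (ε : ℝ) (hε : 0 < ε) (t s : ℝ)
    (ht0 : 0 ≤ t) (ht1 : t ≤ 1) (hs0 : 0 ≤ s) (hs1 : s ≤ 1) :
    |ε ^ 2 *
        (-(Real.exp (-(ε * Real.sqrt p * |t - s|)) *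
            (1 + Real.exp (-(2 * ε * Real.sqrt p * min t s))) *
            (1 + Real.exp (-(2 * ε * Real.sqrt p * max t s)))) /
          (2 * ε * Real.sqrt p * (1 - Real.exp (-(2 * ε * Real.sqrt p)))))
      + 1 / p| ≤ (Real.exp (3 * (ε * Real.sqrt p)) - 1) / p := by
  rw [show (2:ℝ) * ε * Real.sqrt p = ε * Real.sqrt p * 2 from by ring]
  obtain ⟨q, hq_def⟩ : ∃ q : ℝ, q = ε * Real.sqrt p := ⟨_, rfl⟩
  rw [← hq_def]
  have hsp : 0 < Real.sqrt p := Real.sqrt_pos.mpr hp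
  have hsq : Real.sqrt p * Real.sqrt p = p := Real.mul_self_sqrt hp.le
  have hq : 0 < q := by rw [hq_def]; positivity
  have hq2 : q * q = ε ^ 2 * p := by rw [hq_def]; linear_combination ε ^ 2 * hsq
  have habs0 : 0 ≤ |t - s| := abs_nonneg _
  have habs1 : |t - s| ≤ 1 := abs_le.mpr ⟨by linarith, by linarith⟩
  have hmin0 : 0 ≤ min t s := le_min ht0 hs0
  have hmin1 : min t s ≤ 1 := le_trans (min_le_left t s) ht1
  have hmax0 : 0 ≤ max t s := le_trans ht0 (le_max_left t s)
  have hmax1 : max t s ≤ 1 := max_le ht1 hs1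
  apply aux_main p ε q _ _ hp hq hq2
  · -- A ≤ 4
    have a1 : Real.exp (-(q * |t - s|)) ≤ 1 :=
      Real.exp_le_one_iff.mpr (neg_nonpos_of_nonneg (by positivity))
    have a2 : Real.exp (-(q * 2 * min t s)) ≤ 1 :=
      Real.exp_le_one_iff.mpr (neg_nonpos_of_nonneg (by positivity))
    have a3 : Real.exp (-(q * 2 * max t s)) ≤ 1 :=
      Real.exp_le_one_iff.mpr (neg_nonpos_of_nonneg (by positivity))
    have h12 : Real.exp (-(q * |t - s|)) * (1 + Real.exp (-(q * 2 * min t s))) ≤ 1 * 2 :=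
      mul_le_mul a1 (by linarith) (by positivity) one_pos.le
    have h123 := mul_le_mul h12
      (show (1:ℝ) + Real.exp (-(q * 2 * max t s)) ≤ 2 by linarith)
      (by positivity) (by norm_num)
    linarith
  · -- 4 exp(-3q) ≤ A
    have hee : Real.exp (-q) * Real.exp (-q) = Real.exp (-(q * 2)) := by
      rw [← Real.exp_add]; ring_nf
    have hamgm : 2 * Real.exp (-q) ≤ 1 + Real.exp (-(q * 2)) := by
      nlinarith [sq_nonneg (1 - Real.exp (-q)), hee]
    have b1 : Real.exp (-q) ≤ Real.exp (-(q * |t - s|)) := by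
      apply Real.exp_le_exp.mpr
      have : q * |t - s| ≤ q := mul_le_of_le_one_right hq.le habs1
      linarith
    have hX2 : Real.exp (-(q * 2)) ≤ Real.exp (-(q * 2 * min t s)) := by
      apply Real.exp_le_exp.mpr
      have : q * 2 * min t s ≤ q * 2 := mul_le_of_le_one_right (by positivity) hmin1
      linarith
    have hX3 : Real.exp (-(q * 2)) ≤ Real.exp (-(q * 2 * max t s)) := by
      apply Real.exp_le_exp.mpr
      have : q * 2 * max t s ≤ q * 2 := mul_le_of_le_one_right (by positivity) hmax1
      linarith
    have b2 : 2 * Real.exp (-q) ≤ 1 + Real.exp (-(q * 2 * min t s)) := by linarith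
    have b3 : 2 * Real.exp (-q) ≤ 1 + Real.exp (-(q * 2 * max t s)) := by linarith
    have c1 : Real.exp (-q) * (2 * Real.exp (-q)) ≤
        Real.exp (-(q * |t - s|)) * (1 + Real.exp (-(q * 2 * min t s))) :=
      mul_le_mul b1 b2 (by positivity) (Real.exp_pos _).le
    have c2 : (Real.exp (-q) * (2 * Real.exp (-q))) * (2 * Real.exp (-q)) ≤
        (Real.exp (-(q * |t - s|)) * (1 + Real.exp (-(q * 2 * min t s)))) *
          (1 + Real.exp (-(q * 2 * max t s))) :=
      mul_le_mul c1 b3 (by positivity) (by positivity)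
    have he3m : Real.exp (-q) * Real.exp (-q) * Real.exp (-q) = Real.exp (-(3 * q)) := by
      rw [← Real.exp_add, ← Real.exp_add]; ring_nf
    have c3 : (Real.exp (-q) * (2 * Real.exp (-q))) * (2 * Real.exp (-q)) =
        4 * Real.exp (-(3 * q)) := by linear_combination 4 * he3m
    linarith
  · -- exp(q*2) * X = 1
    rw [← Real.exp_add]; simp
  · -- 1 - X ≤ 2q
    have := Real.add_one_le_exp (-(q * 2))
    linarith
  · -- 2qX ≤ 1 - X
    have h1 := Real.add_one_le_exp (q * 2)
    have h2 : Real.exp (q * 2) * Real.exp (-(q * 2)) = 1 := by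
      rw [← Real.exp_add]; simp
    nlinarith [Real.exp_pos (-(q * 2))]

/-- `sup_{t,s ∈ [0,1]} |ε²·G_{2,ε}(t,s) + 1/p| → 0` as `ε → 0⁺`,
where `G_{2,ε}` is the Green function of the Neumann problem. -/
theorem green_neumann_uniform_limit (p : ℝ) (hp : 0 < p) :
    Tendsto
      (fun ε : ℝ =>
        ⨆ t : Set.Icc (0:ℝ) 1, ⨆ s : Set.Icc (0:ℝ) 1,
          |ε ^ 2 *
              (-(Real.exp (-(ε * Real.sqrt p * |(t:ℝ) - s|)) *
                  (1 + Real.exp (-(2 * ε * Real.sqrt p * min (t:ℝ) s))) *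
                  (1 + Real.exp (-(2 * ε * Real.sqrt p * max (t:ℝ) s)))) /
                (2 * ε * Real.sqrt p * (1 - Real.exp (-(2 * ε * Real.sqrt p)))))
            + 1 / p|)
      (nhdsWithin 0 (Set.Ioi 0)) (nhds 0) := by
  apply squeeze_zero'
  · filter_upwards with ε
    exact Real.iSup_nonneg fun t => Real.iSup_nonneg fun s => abs_nonneg _
  · filter_upwards [self_mem_nhdsWithin] with ε (hε : ε ∈ Set.Ioi (0:ℝ))
    have hB : 0 ≤ (Real.exp (3 * (ε * Real.sqrt p)) - 1) / p := by
      apply div_nonneg _ hp.le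
      have := Real.one_le_exp (show (0:ℝ) ≤ 3 * (ε * Real.sqrt p) from by
        have h0 : (0:ℝ) < ε := hε
        positivity)
      linarith
    apply Real.iSup_le _ hB
    intro t
    apply Real.iSup_le _ hB
    intro s
    exact green_pointwise p hp ε hε (t:ℝ) (s:ℝ) t.2.1 t.2.2 s.2.1 s.2.2
  · have hc : Continuous fun ε : ℝ => (Real.exp (3 * (ε * Real.sqrt p)) - 1) / p := by
      fun_prop
    have := (hc.tendsto 0).mono_left (nhdsWithin_le_nhds (s := Set.Ioi (0:ℝ)))
    simpa using this
end

section
/- Let p > 0 and for ε > 0 define G_{3,ε}(t,s) = -(e^{-ε√p|t-s|} + e^{-ε√p(1-|t-s|)}) / (2ε√p·(1-e^{-ε√p})) on [0,1]×[0,1]. Then sup_{t,s ∈ [0,1]} |ε²·G_{3,ε}(t,s) + 1/p| → 0 as ε → 0⁺. -/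
/-!
Put `a = ε√p` and `u = |t - s|`. Then `ε² G_{3,ε}(t,s) = -K(a,u)/p` for the kernel
`K(a,u) = a (e^{-au} + e^{-a(1-u)}) / (2(1 - e^{-a}))`. For `u ∈ [0,1]` the numerator bracket lies in
`[2e^{-a}, 2]`, while `a e^{-a} ≤ 1 - e^{-a} ≤ a`; hence `e^{-a} ≤ K(a,u) ≤ e^a`, and so
`|ε² G_{3,ε} + 1/p| = |1 - K|/p ≤ (e^{ε√p} - 1)/p`, uniformly in `t, s`, which tends to `0`.
-/

open Filter Set Real

noncomputable def periodicKernel (a u : ℝ) : ℝ :=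
  a * (exp (-(a * u)) + exp (-(a * (1 - u)))) / (2 * (1 - exp (-a)))

lemma periodicKernel_mem_Icc {a u : ℝ} (ha : 0 < a) (hu : u ∈ Icc (0 : ℝ) 1) :
    periodicKernel a u ∈ Icc (exp (-a)) (exp a) := by
  obtain ⟨hu0, hu1⟩ := hu
  have hD : 0 < 1 - exp (-a) := by linarith [exp_lt_one_iff.2 (neg_lt_zero.2 ha)]
  have hS_le : exp (-(a * u)) + exp (-(a * (1 - u))) ≤ 2 := by
    linarith [exp_le_one_iff.2 (neg_nonpos.2 (mul_nonneg ha.le hu0)),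
      exp_le_one_iff.2 (neg_nonpos.2 (mul_nonneg ha.le (sub_nonneg.2 hu1)))]
  have hS_ge : 2 * exp (-a) ≤ exp (-(a * u)) + exp (-(a * (1 - u))) := by
    linarith [exp_le_exp.2 (show -a ≤ -(a * u) by nlinarith),
      exp_le_exp.2 (show -a ≤ -(a * (1 - u)) by nlinarith)]
  have hD_le : 1 - exp (-a) ≤ a := by linarith [add_one_le_exp (-a)]
  have hD_ge : a ≤ exp a * (1 - exp (-a)) := by
    rw [mul_sub, ← exp_add, add_neg_cancel, exp_zero, mul_one]
    linarith [add_one_le_exp a]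
  unfold periodicKernel
  constructor
  · rw [le_div_iff₀ (by positivity)]
    nlinarith [exp_pos (-a)]
  · rw [div_le_iff₀ (by positivity)]
    nlinarith

lemma abs_one_sub_le_exp_sub_one {a x : ℝ} (hx : x ∈ Icc (exp (-a)) (exp a)) :
    |1 - x| ≤ exp a - 1 := by
  rw [abs_le]
  constructor <;> linarith [hx.1, hx.2, add_one_le_exp a, add_one_le_exp (-a)]

lemma sq_mul_periodicGreen_add_inv {p : ℝ} (hp : 0 < p) (ε u : ℝ) :
    ε ^ 2 *
        (-(exp (-(ε * √p * u)) + exp (-(ε * √p * (1 - u)))) /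
          (2 * ε * √p * (1 - exp (-(ε * √p))))) + 1 / p
      = (1 - periodicKernel (ε * √p) u) / p := by
  rcases eq_or_ne ε 0 with rfl | hε
  · simp [periodicKernel]
  have hsp : 0 < √p := sqrt_pos.2 hp
  have hD : 1 - exp (-(ε * √p)) ≠ 0 := by
    rw [sub_ne_zero, ne_comm, Ne, exp_eq_one_iff, neg_eq_zero]
    exact mul_ne_zero hε hsp.ne'
  unfold periodicKernel
  field_simp
  linear_combination ε * (exp (-(ε * √p * u)) + exp (-(ε * √p * (1 - u)))) * sq_sqrt hp.le

/-- `sup_{t,s ∈ [0,1]} |ε²·G_{3,ε}(t,s) + 1/p| → 0` as `ε → 0⁺`,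
where `G_{3,ε}` is the Green function of the periodic problem. -/
theorem green_periodic_uniform_limit (p : ℝ) (hp : 0 < p) :
    Tendsto
      (fun ε : ℝ =>
        ⨆ t : Set.Icc (0:ℝ) 1, ⨆ s : Set.Icc (0:ℝ) 1,
          |ε ^ 2 *
              (-(Real.exp (-(ε * Real.sqrt p * |(t:ℝ) - s|)) +
                  Real.exp (-(ε * Real.sqrt p * (1 - |(t:ℝ) - s|)))) /
                (2 * ε * Real.sqrt p * (1 - Real.exp (-(ε * Real.sqrt p)))))
            + 1 / p|)
      (nhdsWithin 0 (Set.Ioi 0)) (nhds 0) := by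
  have hbound : Tendsto (fun ε : ℝ => (exp (ε * √p) - 1) / p) (nhdsWithin 0 (Ioi 0)) (nhds 0) :=
    tendsto_nhdsWithin_of_tendsto_nhds (by simpa using (by fun_prop : Continuous
      fun ε : ℝ => (exp (ε * √p) - 1) / p).tendsto 0)
  refine tendsto_of_tendsto_of_tendsto_of_le_of_le' tendsto_const_nhds hbound
    (Eventually.of_forall fun ε => iSup_nonneg fun t => iSup_nonneg fun s => abs_nonneg _) ?_
  filter_upwards [self_mem_nhdsWithin] with ε (hε : 0 < ε)
  have ha : 0 < ε * √p := mul_pos hε (sqrt_pos.2 hp)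
  have hbound_nonneg : 0 ≤ (exp (ε * √p) - 1) / p := by
    have := add_one_le_exp (ε * √p)
    exact div_nonneg (by linarith) hp.le
  refine Real.iSup_le (fun t => Real.iSup_le (fun s => ?_) hbound_nonneg) hbound_nonneg
  have hu : |(t : ℝ) - s| ∈ Icc (0 : ℝ) 1 :=
    ⟨abs_nonneg _, abs_sub_le_of_nonneg_of_le t.2.1 t.2.2 s.2.1 s.2.2⟩
  rw [sq_mul_periodicGreen_add_inv hp, abs_div, abs_of_pos hp]
  exact div_le_div_of_nonneg_right
    (abs_one_sub_le_exp_sub_one (periodicKernel_mem_Icc ha hu)) hp.le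
end

section
/- Let p > 0 and for ε > 0 define G_{3,ε}(t,s) = -(e^{-ε√p|t-s|} + e^{-ε√p(1-|t-s|)}) / (2ε√p·(1-e^{-ε√p})) on [0,1]×[0,1]. For each fixed s, G_{3,ε}(·,s) is differentiable in t at every t ≠ s, and ε² · sup_{t≠s, t,s ∈ [0,1]} |∂G_{3,ε}/∂t (t,s)| → 0 as ε → 0⁺. -/
open Filter Set

private lemma green_key (p ε : ℝ) (hp : 0 < p) (hε : 0 < ε) (s t : ℝ)
    (hs : s ∈ Set.Icc (0:ℝ) 1) (ht : t ∈ Set.Icc (0:ℝ) 1) (hts : t ≠ s) :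
    ∃ D : ℝ, HasDerivAt (fun u : ℝ =>
      -(Real.exp (-(ε * Real.sqrt p * |u - s|)) +
          Real.exp (-(ε * Real.sqrt p * (1 - |u - s|)))) /
        (2 * ε * Real.sqrt p * (1 - Real.exp (-(ε * Real.sqrt p))))) D t ∧ |D| ≤ 1/2 := by
  set a := ε * Real.sqrt p with ha_def
  have ha : 0 < a := mul_pos hε (Real.sqrt_pos.mpr hp)
  have he : Real.exp (-a) < 1 := Real.exp_lt_one_iff.mpr (by linarith)
  have hden : 0 < 2 * ε * Real.sqrt p * (1 - Real.exp (-(ε * Real.sqrt p))) := by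
    have : 2 * ε * Real.sqrt p = 2 * a := by rw [ha_def]; ring
    rw [this]
    exact mul_pos (by linarith) (by rw [← ha_def]; linarith)
  obtain ⟨σ, hσ1, hσ⟩ : ∃ σ : ℝ, |σ| = 1 ∧ HasDerivAt (fun u => |u - s|) σ t := by
    rcases hts.lt_or_gt with h | h
    · refine ⟨-1, by norm_num, ?_⟩
      have h1 : HasDerivAt (fun u : ℝ => s - u) (-1) t := (hasDerivAt_id t).const_sub s
      refine h1.congr_of_eventuallyEq ?_
      filter_upwards [Iio_mem_nhds h] with u hu
      rw [abs_of_neg (sub_neg.mpr hu), neg_sub]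
    · refine ⟨1, by norm_num, ?_⟩
      have h1 : HasDerivAt (fun u : ℝ => u - s) 1 t := (hasDerivAt_id t).sub_const s
      refine h1.congr_of_eventuallyEq ?_
      filter_upwards [Ioi_mem_nhds h] with u hu
      rw [abs_of_pos (sub_pos.mpr hu)]
  set d := |t - s| with hd_def
  have hd0 : 0 ≤ d := abs_nonneg _
  have hd1 : d ≤ 1 := by
    rw [hd_def, abs_sub_le_iff]
    constructor <;> [linarith [ht.2, hs.1]; linarith [hs.2, ht.1]]
  have h1 : HasDerivAt (fun u => -(a * |u - s|)) (-(a * σ)) t := (hσ.const_mul a).neg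
  have h1e := h1.exp
  have h2 : HasDerivAt (fun u => -(a * (1 - |u - s|))) (-(a * -σ)) t :=
    ((hσ.const_sub 1).const_mul a).neg
  have h2e := h2.exp
  have hD := ((h1e.add h2e).neg.div_const (2 * ε * Real.sqrt p * (1 - Real.exp (-(ε * Real.sqrt p)))))
  refine ⟨_, hD, ?_⟩
  have hdiff : |Real.exp (-(a * (1 - d))) - Real.exp (-(a * d))| ≤ 1 - Real.exp (-a) := by
    have e1 : Real.exp (-(a * d)) ≤ 1 := Real.exp_le_one_iff.mpr (by nlinarith)
    have e2 : Real.exp (-a) ≤ Real.exp (-(a * d)) := Real.exp_le_exp.mpr (by nlinarith)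
    have e3 : Real.exp (-(a * (1 - d))) ≤ 1 := Real.exp_le_one_iff.mpr (by nlinarith)
    have e4 : Real.exp (-a) ≤ Real.exp (-(a * (1 - d))) := Real.exp_le_exp.mpr (by nlinarith)
    rw [abs_sub_le_iff]; constructor <;> linarith
  have hnum : Real.exp (-(a * |t - s|)) * -(a * σ) + Real.exp (-(a * (1 - |t - s|))) * -(a * -σ)
      = a * σ * (Real.exp (-(a * (1 - d))) - Real.exp (-(a * d))) := by
    rw [← hd_def]; ring
  rw [abs_div, abs_neg, hnum, abs_of_pos hden, abs_mul, abs_mul, hσ1, abs_of_pos ha,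
    div_le_iff₀ hden]
  have : 2 * ε * Real.sqrt p * (1 - Real.exp (-(ε * Real.sqrt p))) = 2 * (a * (1 - Real.exp (-a))) := by
    rw [ha_def]; ring
  rw [this]
  nlinarith [mul_le_mul_of_nonneg_left hdiff ha.le]

/-- for each fixed `s`, the periodic Green function `G_{3,ε}(·,s)` is
differentiable in `t` at every `t ≠ s`, and
`ε² · sup_{t≠s} |∂G_{3,ε}/∂t (t,s)| → 0` as `ε → 0⁺`. -/
theorem green_periodic_derivative_limit (p : ℝ) (hp : 0 < p)
    (G : ℝ → ℝ → ℝ → ℝ)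
    (hG : ∀ ε t s, G ε t s =
      -(Real.exp (-(ε * Real.sqrt p * |t - s|)) +
          Real.exp (-(ε * Real.sqrt p * (1 - |t - s|)))) /
        (2 * ε * Real.sqrt p * (1 - Real.exp (-(ε * Real.sqrt p))))) :
    (∀ ε : ℝ, 0 < ε → ∀ s ∈ Set.Icc (0:ℝ) 1, ∀ t ∈ Set.Icc (0:ℝ) 1, t ≠ s →
        DifferentiableAt ℝ (fun u => G ε u s) t) ∧
    Tendsto
      (fun ε : ℝ =>
        ε ^ 2 *
          sSup {r : ℝ | ∃ t ∈ Set.Icc (0:ℝ) 1, ∃ s ∈ Set.Icc (0:ℝ) 1, t ≠ s ∧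
            r = |deriv (fun u => G ε u s) t|})
      (nhdsWithin 0 (Set.Ioi 0)) (nhds 0) := by
  have hderiv : ∀ ε : ℝ, 0 < ε → ∀ s ∈ Set.Icc (0:ℝ) 1, ∀ t ∈ Set.Icc (0:ℝ) 1, t ≠ s →
      HasDerivAt (fun u => G ε u s) (deriv (fun u => G ε u s) t) t ∧
      |deriv (fun u => G ε u s) t| ≤ 1/2 := by
    intro ε hε s hs t ht hts
    obtain ⟨D, hD, hDle⟩ := green_key p ε hp hε s t hs ht hts
    have hD' : HasDerivAt (fun u => G ε u s) D t :=
      hD.congr_of_eventuallyEq (Filter.Eventually.of_forall fun u => hG ε u s)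
    rw [hD'.deriv]
    exact ⟨hD', hDle⟩
  constructor
  · intro ε hε s hs t ht hts
    exact ((hderiv ε hε s hs t ht hts).1).differentiableAt
  · have hb : ∀ ε : ℝ, 0 < ε →
        0 ≤ sSup {r : ℝ | ∃ t ∈ Set.Icc (0:ℝ) 1, ∃ s ∈ Set.Icc (0:ℝ) 1, t ≠ s ∧
            r = |deriv (fun u => G ε u s) t|} ∧
        sSup {r : ℝ | ∃ t ∈ Set.Icc (0:ℝ) 1, ∃ s ∈ Set.Icc (0:ℝ) 1, t ≠ s ∧
            r = |deriv (fun u => G ε u s) t|} ≤ 1/2 := by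
      intro ε hε
      set S := {r : ℝ | ∃ t ∈ Set.Icc (0:ℝ) 1, ∃ s ∈ Set.Icc (0:ℝ) 1, t ≠ s ∧
          r = |deriv (fun u => G ε u s) t|} with hS
      have hub : ∀ r ∈ S, r ≤ 1/2 := by
        rintro r ⟨t, ht, s, hs, hts, rfl⟩
        exact (hderiv ε hε s hs t ht hts).2
      have hmem : |deriv (fun u => G ε u 1) 0| ∈ S :=
        ⟨0, by norm_num, 1, by norm_num, by norm_num, rfl⟩
      have hne : S.Nonempty := ⟨_, hmem⟩
      have hbdd : BddAbove S := ⟨1/2, hub⟩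
      exact ⟨le_trans (abs_nonneg _) (le_csSup hbdd hmem), csSup_le hne hub⟩
    have htend : Tendsto (fun ε : ℝ => ε ^ 2 * (1/2)) (nhdsWithin 0 (Set.Ioi 0)) (nhds 0) := by
      have hc : Continuous (fun ε : ℝ => ε ^ 2 * (1/2)) := by continuity
      have := hc.tendsto (0 : ℝ)
      simp only [ne_eq, OfNat.ofNat_ne_zero, not_false_eq_true, zero_pow, zero_mul] at this
      exact this.mono_left nhdsWithin_le_nhds
    refine tendsto_of_tendsto_of_tendsto_of_le_of_le' tendsto_const_nhds htend ?_ ?_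
    · filter_upwards [self_mem_nhdsWithin] with ε hε
      exact mul_nonneg (sq_nonneg ε) (hb ε hε).1
    · filter_upwards [self_mem_nhdsWithin] with ε hε
      exact mul_le_mul_of_nonneg_left (hb ε hε).2 (sq_nonneg ε)
end

section
/- Let F be a Banach space and Ψ : [0,1] × F → F a continuous map satisfying: (AP1) for every φ ∈ F the equation Ψ(0,x) = φ has a unique solution x₀^φ; (AP2) for every φ ∈ F the Fréchet derivative D_xΨ(0,x₀^φ) is a continuous linear isomorphism of F, and sup_{φ ∈ F} ‖(D_xΨ(0,x₀^φ))⁻¹‖ < ∞; (AP3) sup_{x ∈ F} ‖Ψ(ε,x) − Ψ(0,x)‖ → 0 as ε → 0; (AP4) Ψ(ε,·) is Fréchet differentiable for every ε ∈ [0,1] and the differentiability is uniform, i.e. lim_{δ→0} sup_{0<ε≤1} sup_{0<‖x−y‖≤δ} ‖Ψ(ε,y) − Ψ(ε,x) − D_xΨ(ε,x)(y−x)‖ / ‖x−y‖ = 0; (AP5) lim_{ε→0} limsup_{δ→0} sup_{‖x−y‖<δ} ‖D_xΨ(ε,x) − D_xΨ(0,y)‖ = 0. Then there exist ε₀ ∈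 (0,1) and δ > 0 such that for every ε ∈ (0,ε₀] and every φ ∈ F there exists a unique x_ε^φ in the closed ball {x : ‖x − x₀^φ‖ ≤ δ} with Ψ(ε, x_ε^φ) = φ. -/
/-!
Fix `φ` and write `L = D_xΨ(0, x₀^φ)`, `‖L⁻¹‖ ≤ C`. By AP4 and AP5, for small `ε` the map
`Ψ(ε, ·)` is approximated by the single linear isomorphism `L` on the whole ball
`B = closedBall (x₀^φ) δ`, with a constant `c < 1 / C` independent of `ε` and `φ`. Such a map is
injective on `B`, and the contraction argument behind the inverse function theorem shows that it
maps `B` onto the ball of radius `(1 / C - c) δ` around `Ψ(ε, x₀^φ)`. By AP3 that ball contains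
`φ = Ψ(0, x₀^φ)` once `ε` is small.
-/

open Metric
open scoped NNReal

section ApproximatesLinearOn

variable {𝕜 E F : Type*} [NontriviallyNormedField 𝕜]
  [NormedAddCommGroup E] [NormedSpace 𝕜 E] [NormedAddCommGroup F] [NormedSpace 𝕜 F]

theorem approximatesLinearOn_of_forall_norm_sub_le {f : E → F} {f' : E →L[𝕜] F} {s : Set E}
    {c₁ c₂ : ℝ≥0} (D : E → E →L[𝕜] F)
    (hD : ∀ x ∈ s, ∀ y ∈ s, ‖f x - f y - D y (x - y)‖ ≤ c₁ * ‖x - y‖)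
    (hf' : ∀ y ∈ s, ‖D y - f'‖ ≤ c₂) :
    ApproximatesLinearOn f f' s (c₁ + c₂) := by
  intro x hx y hy
  calc ‖f x - f y - f' (x - y)‖
      = ‖(f x - f y - D y (x - y)) + (D y - f') (x - y)‖ := by
        rw [sub_apply]; abel_nf
    _ ≤ c₁ * ‖x - y‖ + c₂ * ‖x - y‖ :=
        norm_add_le_of_le (hD x hx y hy)
          ((ContinuousLinearMap.le_opNorm _ _).trans (by gcongr; exact hf' y hy))
    _ = ↑(c₁ + c₂) * ‖x - y‖ := by push_cast; ring

theorem ApproximatesLinearOn.existsUnique_mem_closedBall_eq [CompleteSpace E]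
    {f : E → F} {L : E ≃L[𝕜] F} {C c : ℝ≥0} {b : E} {r : ℝ} {y : F}
    (hf : ApproximatesLinearOn f (L : E →L[𝕜] F) (closedBall b r) c)
    (hC : ‖(L.symm : F →L[𝕜] E)‖₊ ≤ C) (hc : c < C⁻¹)
    (hy : dist y (f b) ≤ ((C : ℝ)⁻¹ - c) * r) :
    ∃! x, x ∈ closedBall b r ∧ f x = y := by
  have hCpos : 0 < C := by
    by_contra! h
    simp [nonpos_iff_eq_zero.mp h] at hc
  have hcC : (c : ℝ) * C < 1 := by
    have := mul_lt_mul_of_pos_right (NNReal.coe_lt_coe.mpr hc) (NNReal.coe_pos.mpr hCpos)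
    simpa [hCpos.ne'] using this
  have hr : 0 ≤ r := by
    refine nonneg_of_mul_nonneg_right (dist_nonneg.trans hy) ?_
    rw [sub_pos]; exact_mod_cast hc
  -- `L.symm` with the bound `C` in place of its operator norm, which would be `0` if `E = 0`
  let Lsymm : L.toContinuousLinearMap.NonlinearRightInverse :=
    { toFun := L.symm
      nnnorm := C
      bound' := fun z => ((L.symm : F →L[𝕜] E).le_opNorm z).trans (by gcongr; exact_mod_cast hC)
      right_inv' := L.apply_symm_apply }
  obtain ⟨x, hx, hfx⟩ := hf.surjOn_closedBall_of_nonlinearRightInverse Lsymm hr le_rfl hy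
  refine ⟨x, ⟨hx, hfx⟩, fun x' ⟨hx', hfx'⟩ => ?_⟩
  have hsub : ‖x' - x‖ ≤ c * C * ‖x' - x‖ :=
    calc ‖x' - x‖ = ‖L.symm (L (x' - x))‖ := by rw [L.symm_apply_apply]
      _ ≤ C * ‖L (x' - x)‖ := Lsymm.bound' _
      _ = C * ‖f x' - f x - L (x' - x)‖ := by rw [hfx, hfx', sub_self, zero_sub, norm_neg]
      _ ≤ C * (c * ‖x' - x‖) := by gcongr; exact hf x' hx' x hx
      _ = c * C * ‖x' - x‖ := by ring
  have : ‖x' - x‖ = 0 := by nlinarith [norm_nonneg (x' - x)]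
  exact sub_eq_zero.mp (norm_eq_zero.mp this)

end ApproximatesLinearOn

theorem exists_pos_forall_nnnorm_le {ι E : Type*} [SeminormedAddCommGroup E] {u : ι → E}
    (hu : ∃ C : ℝ, ∀ i, ‖u i‖ ≤ C) : ∃ C : ℝ≥0, 0 < C ∧ ∀ i, ‖u i‖₊ ≤ C := by
  obtain ⟨C, hC⟩ := hu
  refine ⟨(max C 1).toNNReal, by simp, fun i => ?_⟩
  rw [← NNReal.coe_le_coe, coe_nnnorm, Real.coe_toNNReal _ (by positivity)]
  exact (hC i).trans (le_max_left _ _)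

/-- Comparing `G ε` with `G ε'` on the diagonal, the radius that works for the single
parameter `ε'` works for every `ε ≤ ε'`. -/
theorem exists_forall_norm_sub_le_of_forall_exists {X Y : Type*} [SeminormedAddCommGroup X]
    [SeminormedAddCommGroup Y] (G : ℝ → X → Y)
    (hG : ∀ η : ℝ, 0 < η → ∃ ε' : ℝ, 0 < ε' ∧
      ∀ ε : ℝ, 0 < ε → ε ≤ ε' → ∃ δ : ℝ, 0 < δ ∧ ∀ x y : X, ‖x - y‖ < δ → ‖G ε x - G 0 y‖ ≤ η)
    {η : ℝ} (hη : 0 < η) :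
    ∃ ε' : ℝ, 0 < ε' ∧ ∃ δ : ℝ, 0 < δ ∧
      ∀ ε : ℝ, 0 < ε → ε ≤ ε' → ∀ x y : X, ‖x - y‖ < δ → ‖G ε x - G 0 y‖ ≤ 3 * η := by
  obtain ⟨ε', hε', hG'⟩ := hG η hη
  obtain ⟨δ, hδ, hδG⟩ := hG' ε' hε' le_rfl
  refine ⟨ε', hε', δ, hδ, fun ε hε hεle x y hxy => ?_⟩
  obtain ⟨δε, hδε, hδεG⟩ := hG' ε hε hεle
  have hdiag : ∀ {δ : ℝ}, 0 < δ → ‖x - x‖ < δ := fun h => by rwa [sub_self, norm_zero]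
  calc ‖G ε x - G 0 y‖ = ‖(G ε x - G 0 x) - (G ε' x - G 0 x) + (G ε' x - G 0 y)‖ := by abel_nf
    _ ≤ ‖G ε x - G 0 x‖ + ‖G ε' x - G 0 x‖ + ‖G ε' x - G 0 y‖ :=
        (norm_add_le _ _).trans (add_le_add_left (norm_sub_le _ _) _)
    _ ≤ 3 * η := by linarith [hδεG x x (hdiag hδε), hδG x x (hdiag hδ), hδG x y hxy]

theorem uniform_implicit_function_theorem_general
    {F : Type*} [NormedAddCommGroup F] [NormedSpace ℝ F] [CompleteSpace F]
    (Ψ : ℝ → F → F)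
    -- AP1: for every φ, the equation Ψ(0,x) = φ has the unique solution x₀ φ
    (x₀ : F → F)
    (hAP1 : ∀ φ : F, Ψ 0 (x₀ φ) = φ ∧ ∀ x : F, Ψ 0 x = φ → x = x₀ φ)
    -- the Fréchet derivative of Ψ(ε,·)
    (DΨ : ℝ → F → (F →L[ℝ] F))
    -- AP2: D_xΨ(0, x₀ φ) is an isomorphism with uniformly bounded inverse
    (Dinv : F → (F →L[ℝ] F))
    (hAP2 : ∀ φ : F, (DΨ 0 (x₀ φ)).comp (Dinv φ) = ContinuousLinearMap.id ℝ F ∧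
      (Dinv φ).comp (DΨ 0 (x₀ φ)) = ContinuousLinearMap.id ℝ F)
    (hAP2' : ∃ C : ℝ, ∀ φ : F, ‖Dinv φ‖ ≤ C)
    -- AP3: sup_x ‖Ψ(ε,x) − Ψ(0,x)‖ → 0 as ε → 0
    (hAP3 : ∀ η : ℝ, 0 < η → ∃ ε' : ℝ, 0 < ε' ∧
      ∀ ε : ℝ, 0 < ε → ε ≤ ε' → ∀ x : F, ‖Ψ ε x - Ψ 0 x‖ ≤ η)
    -- AP4: the Fréchet differentiability is uniform in ε ∈ (0,1] and x
    (hAP4 : ∀ η : ℝ, 0 < η → ∃ δ : ℝ, 0 < δ ∧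
      ∀ ε ∈ Set.Ioc (0:ℝ) 1, ∀ x y : F, ‖y - x‖ ≤ δ →
        ‖Ψ ε y - Ψ ε x - DΨ ε x (y - x)‖ ≤ η * ‖y - x‖)
    -- AP5: uniform continuity of the Fréchet derivative
    (hAP5 : ∀ η : ℝ, 0 < η → ∃ ε' : ℝ, 0 < ε' ∧
      ∀ ε : ℝ, 0 < ε → ε ≤ ε' → ∃ δ : ℝ, 0 < δ ∧
        ∀ x y : F, ‖x - y‖ < δ → ‖DΨ ε x - DΨ 0 y‖ ≤ η) :
    ∃ ε₀ ∈ Set.Ioo (0:ℝ) 1, ∃ δ : ℝ, 0 < δ ∧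
      ∀ ε : ℝ, 0 < ε → ε ≤ ε₀ → ∀ φ : F,
        ∃! x : F, ‖x - x₀ φ‖ ≤ δ ∧ Ψ ε x = φ := by
  obtain ⟨C, hC0, hC⟩ := exists_pos_forall_nnnorm_le hAP2'
  obtain ⟨c, hc0, hc⟩ : ∃ c : ℝ≥0, (0 : ℝ) < c ∧ c + 3 * c < C⁻¹ :=
    ⟨(8 * C)⁻¹, by positivity, by rw [← NNReal.coe_lt_coe]; push_cast; field_simp; norm_num⟩
  obtain ⟨δ₄, hδ₄, hΨ⟩ := hAP4 c hc0
  obtain ⟨ε₅, hε₅, δ₅, hδ₅, hD⟩ := exists_forall_norm_sub_le_of_forall_exists DΨ hAP5 hc0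
  obtain ⟨δ, hδ, hδδ₄, hδδ₅⟩ : ∃ δ : ℝ, 0 < δ ∧ 2 * δ ≤ δ₄ ∧ δ < δ₅ :=
    ⟨min δ₄ δ₅ / 2, by positivity, by linarith [min_le_left δ₄ δ₅],
      by linarith [min_le_right δ₄ δ₅]⟩
  obtain ⟨ε₃, hε₃, hΨ₀⟩ := hAP3 (((C : ℝ)⁻¹ - ↑(c + 3 * c)) * δ)
    (mul_pos (sub_pos.mpr (by exact_mod_cast hc)) hδ)
  refine ⟨min (min ε₃ ε₅) (1 / 2), ⟨by positivity, (min_le_right _ _).trans_lt (by norm_num)⟩,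
    δ, hδ, fun ε hε hεle φ => ?_⟩
  obtain ⟨hεmin, hε1⟩ := le_min_iff.mp hεle
  obtain ⟨hεε₃, hεε₅⟩ := le_min_iff.mp hεmin
  have hlin : ApproximatesLinearOn (Ψ ε) (DΨ 0 (x₀ φ)) (closedBall (x₀ φ) δ) (c + 3 * c) := by
    refine approximatesLinearOn_of_forall_norm_sub_le (DΨ ε) (fun x hx y hy => ?_) (fun y hy => ?_)
    · refine hΨ ε ⟨hε, by linarith⟩ y x ?_
      rw [← dist_eq_norm]
      linarith [dist_triangle_right x y (x₀ φ), mem_closedBall.mp hx, mem_closedBall.mp hy]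
    · push_cast
      exact hD ε hε hεε₅ y (x₀ φ) ((mem_closedBall_iff_norm.mp hy).trans_lt hδδ₅)
  have hφ : dist φ (Ψ ε (x₀ φ)) ≤ ((C : ℝ)⁻¹ - ↑(c + 3 * c)) * δ := by
    rw [dist_comm, dist_eq_norm]
    nth_rw 2 [← (hAP1 φ).1]
    exact hΨ₀ ε hε hεε₃ (x₀ φ)
  simpa only [mem_closedBall_iff_norm] using
    ApproximatesLinearOn.existsUnique_mem_closedBall_eq
      (L := .equivOfInverse' _ _ (hAP2 φ).1 (hAP2 φ).2) hlin (hC φ) hc hφ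

/-- uniform implicit function theorem. `F` is a real Banach space,
`Ψ : [0,1] × F → F` is continuous, and under the uniform conditions
AP1–AP5 there exist `ε₀ ∈ (0,1)` and `δ > 0` such that for every `ε ∈ (0,ε₀]`
and every `φ ∈ F` the equation `Ψ(ε,x) = φ` has a unique solution in the closed
ball of radius `δ` around `x₀^φ`. -/
theorem uniform_implicit_function_theorem
    {F : Type*} [NormedAddCommGroup F] [NormedSpace ℝ F] [CompleteSpace F]
    (Ψ : ℝ → F → F)
    (hcont : ContinuousOn (fun q : ℝ × F => Ψ q.1 q.2) (Set.Icc (0:ℝ) 1 ×ˢ Set.univ))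
    -- AP1: for every φ, the equation Ψ(0,x) = φ has the unique solution x₀ φ
    (x₀ : F → F)
    (hAP1 : ∀ φ : F, Ψ 0 (x₀ φ) = φ ∧ ∀ x : F, Ψ 0 x = φ → x = x₀ φ)
    -- the Fréchet derivative of Ψ(ε,·)
    (DΨ : ℝ → F → (F →L[ℝ] F))
    (hderiv : ∀ ε ∈ Set.Icc (0:ℝ) 1, ∀ x : F, HasFDerivAt (Ψ ε) (DΨ ε x) x)
    -- AP2: D_xΨ(0, x₀ φ) is an isomorphism with uniformly bounded inverse
    (Dinv : F → (F →L[ℝ] F))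
    (hAP2 : ∀ φ : F, (DΨ 0 (x₀ φ)).comp (Dinv φ) = ContinuousLinearMap.id ℝ F ∧
      (Dinv φ).comp (DΨ 0 (x₀ φ)) = ContinuousLinearMap.id ℝ F)
    (hAP2' : ∃ C : ℝ, ∀ φ : F, ‖Dinv φ‖ ≤ C)
    -- AP3: sup_x ‖Ψ(ε,x) − Ψ(0,x)‖ → 0 as ε → 0
    (hAP3 : ∀ η : ℝ, 0 < η → ∃ ε' : ℝ, 0 < ε' ∧
      ∀ ε : ℝ, 0 < ε → ε ≤ ε' → ∀ x : F, ‖Ψ ε x - Ψ 0 x‖ ≤ η)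
    -- AP4: the Fréchet differentiability is uniform in ε ∈ (0,1] and x
    (hAP4 : ∀ η : ℝ, 0 < η → ∃ δ : ℝ, 0 < δ ∧
      ∀ ε ∈ Set.Ioc (0:ℝ) 1, ∀ x y : F, ‖y - x‖ ≤ δ →
        ‖Ψ ε y - Ψ ε x - DΨ ε x (y - x)‖ ≤ η * ‖y - x‖)
    -- AP5: uniform continuity of the Fréchet derivative
    (hAP5 : ∀ η : ℝ, 0 < η → ∃ ε' : ℝ, 0 < ε' ∧
      ∀ ε : ℝ, 0 < ε → ε ≤ ε' → ∃ δ : ℝ, 0 < δ ∧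
        ∀ x y : F, ‖x - y‖ < δ → ‖DΨ ε x - DΨ 0 y‖ ≤ η) :
    ∃ ε₀ ∈ Set.Ioo (0:ℝ) 1, ∃ δ : ℝ, 0 < δ ∧
      ∀ ε : ℝ, 0 < ε → ε ≤ ε₀ → ∀ φ : F,
        ∃! x : F, ‖x - x₀ φ‖ ≤ δ ∧ Ψ ε x = φ :=
  uniform_implicit_function_theorem_general Ψ x₀ hAP1 DΨ Dinv hAP2 hAP2' hAP3 hAP4 hAP5
end

section
/- Let p > 0 and f : [0,1] → ℝ be continuous. Suppose that for each sufficiently small ε > 0, x^ε : [0,1] → ℝ is a twice continuously differentiable function satisfying ẍ^ε(t) = ε²·(p·x^ε(t) + f(t)) for all t ∈ [0,1] with Neumann boundary conditions ẋ^ε(0) = ẋ^ε(1) = 0. Then sup_{0≤t≤1} |x^ε(t) + (1/p)·∫₀¹ f(s) ds| → 0 as ε → 0⁺. -/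
/-!
Integrating the equation over `[0,1]` and using the Neumann conditions shows that
`y = x^ε + (1/p)∫₀¹ f` has mean zero, hence vanishes somewhere, while `ẏ(0) = 0`.
Two applications of the mean value inequality then give `sup |y| ≤ sup |ÿ|`, and
`ÿ = ε²(p y + (f - ∫₀¹ f))` turns this into `sup |y| ≤ ε²(p sup |y| + sup |f - ∫₀¹ f|)`.
Once `ε² p ≤ 1/2` this absorbs into `sup |y| ≤ 2 ε² sup |f - ∫₀¹ f|`.
-/

open Filter Set MeasureTheory

theorem intervalIntegral_eq_sub_of_hasDerivWithinAt_Icc {g g' : ℝ → ℝ} {a b : ℝ} (hab : a ≤ b)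
    (hg : ∀ t ∈ Icc a b, HasDerivWithinAt g (g' t) (Icc a b) t)
    (hg' : IntervalIntegrable g' volume a b) :
    ∫ t in a..b, g' t = g b - g a :=
  intervalIntegral.integral_eq_sub_of_hasDerivAt_of_le hab
    (fun t ht => (hg t ht).continuousWithinAt)
    (fun t ht => (hg t (Ioo_subset_Icc_self ht)).hasDerivAt (Icc_mem_nhds ht.1 ht.2)) hg'

theorem exists_eq_zero_of_intervalIntegral_eq_zero {y : ℝ → ℝ} {a b : ℝ} (hab : a < b)
    (hy : ContinuousOn y (Icc a b)) (h : ∫ t in a..b, y t = 0) :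
    ∃ τ ∈ Icc a b, y τ = 0 := by
  obtain ⟨τ, hτ, hyτ⟩ := exists_eq_interval_average hab.ne (by rwa [uIcc_of_le hab.le])
  refine ⟨τ, ?_, ?_⟩
  · rw [← uIcc_of_le hab.le]
    exact uIoo_subset_uIcc_self hτ
  · rw [hyτ, interval_average_eq, h, smul_zero]

theorem abs_sub_le_of_abs_hasDerivWithinAt_le {g g' : ℝ → ℝ} {C s t : ℝ}
    (hg : ∀ u ∈ Icc (0:ℝ) 1, HasDerivWithinAt g (g' u) (Icc 0 1) u)
    (hC : ∀ u ∈ Icc (0:ℝ) 1, |g' u| ≤ C) (hs : s ∈ Icc (0:ℝ) 1) (ht : t ∈ Icc (0:ℝ) 1) :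
    |g t - g s| ≤ C := by
  have hC0 : 0 ≤ C := (abs_nonneg _).trans (hC s hs)
  have hts : |t - s| ≤ 1 := abs_sub_le_iff.2 ⟨by linarith [ht.2, hs.1], by linarith [hs.2, ht.1]⟩
  calc |g t - g s| ≤ C * |t - s| :=
        (convex_Icc 0 1).norm_image_sub_le_of_norm_hasDerivWithin_le hg hC hs ht
    _ ≤ C := mul_le_of_le_one_right hC0 hts

theorem abs_le_of_abs_second_deriv_le {y y' y'' : ℝ → ℝ} {K τ σ : ℝ}
    (hy : ∀ t ∈ Icc (0:ℝ) 1, HasDerivWithinAt y (y' t) (Icc 0 1) t)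
    (hy' : ∀ t ∈ Icc (0:ℝ) 1, HasDerivWithinAt y' (y'' t) (Icc 0 1) t)
    (hτ : τ ∈ Icc (0:ℝ) 1) (hyτ : y τ = 0) (hσ : σ ∈ Icc (0:ℝ) 1) (hy'σ : y' σ = 0)
    (hK : ∀ t ∈ Icc (0:ℝ) 1, |y'' t| ≤ K) :
    ∀ t ∈ Icc (0:ℝ) 1, |y t| ≤ K := by
  have hy'K : ∀ t ∈ Icc (0:ℝ) 1, |y' t| ≤ K := fun t ht => by
    simpa [hy'σ] using abs_sub_le_of_abs_hasDerivWithinAt_le hy' hK hσ ht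
  exact fun t ht => by simpa [hyτ] using abs_sub_le_of_abs_hasDerivWithinAt_le hy hy'K hτ ht

structure IsNeumannSolution (p ε : ℝ) (g y y' y'' : ℝ → ℝ) : Prop where
  hasDerivWithinAt : ∀ t ∈ Icc (0:ℝ) 1, HasDerivWithinAt y (y' t) (Icc 0 1) t
  hasDerivWithinAt_deriv : ∀ t ∈ Icc (0:ℝ) 1, HasDerivWithinAt y' (y'' t) (Icc 0 1) t
  ode : ∀ t ∈ Icc (0:ℝ) 1, y'' t = ε ^ 2 * (p * y t + g t)
  deriv_zero : y' 0 = 0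
  deriv_one : y' 1 = 0

namespace IsNeumannSolution

variable {p ε : ℝ} {g y y' y'' : ℝ → ℝ}

theorem continuousOn (hy : IsNeumannSolution p ε g y y' y'') : ContinuousOn y (Icc 0 1) :=
  fun t ht => (hy.hasDerivWithinAt t ht).continuousWithinAt

theorem integral_eq_zero (hy : IsNeumannSolution p ε g y y' y'') (hp : p ≠ 0) (hε : ε ≠ 0)
    (hg : ContinuousOn g (Icc 0 1)) (hg0 : ∫ t in (0:ℝ)..1, g t = 0) :
    ∫ t in (0:ℝ)..1, y t = 0 := by
  have hyi : IntervalIntegrable y volume 0 1 :=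
    hy.continuousOn.intervalIntegrable_of_Icc zero_le_one
  have hgi : IntervalIntegrable g volume 0 1 := hg.intervalIntegrable_of_Icc zero_le_one
  have hrhs : ∫ t in (0:ℝ)..1, y'' t = ε ^ 2 * (p * ∫ t in (0:ℝ)..1, y t) := by
    rw [intervalIntegral.integral_congr (g := fun t => ε ^ 2 * (p * y t + g t))
        (fun t ht => hy.ode t (by rwa [uIcc_of_le zero_le_one] at ht)),
      intervalIntegral.integral_const_mul, intervalIntegral.integral_add (hyi.const_mul p) hgi,
      intervalIntegral.integral_const_mul, hg0, add_zero]
  have hy''i : IntervalIntegrable y'' volume 0 1 :=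
    (continuousOn_const.mul ((continuousOn_const.mul hy.continuousOn).add hg)).congr
      (fun t ht => hy.ode t ht) |>.intervalIntegrable_of_Icc zero_le_one
  have hlhs : ∫ t in (0:ℝ)..1, y'' t = 0 := by
    rw [intervalIntegral_eq_sub_of_hasDerivWithinAt_Icc zero_le_one hy.hasDerivWithinAt_deriv
      hy''i, hy.deriv_zero, hy.deriv_one, sub_zero]
  simpa [hp, hε] using hrhs.symm.trans hlhs

theorem iSup_abs_le (hy : IsNeumannSolution p ε g y y' y'') (hp : 0 < p) (hε : ε ≠ 0)
    (hεp : ε ^ 2 * p ≤ 1 / 2) (hg : ContinuousOn g (Icc 0 1))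
    (hg0 : ∫ t in (0:ℝ)..1, g t = 0) {G : ℝ} (hG : ∀ t ∈ Icc (0:ℝ) 1, |g t| ≤ G) :
    ⨆ t : Icc (0:ℝ) 1, |y t| ≤ 2 * ε ^ 2 * G := by
  set M := ⨆ t : Icc (0:ℝ) 1, |y t|
  have hM0 : 0 ≤ M := Real.iSup_nonneg fun _ => abs_nonneg _
  have hyM : ∀ t ∈ Icc (0:ℝ) 1, |y t| ≤ M := by
    obtain ⟨B, hB⟩ := isCompact_Icc.exists_bound_of_continuousOn hy.continuousOn
    exact fun t ht => le_ciSup (f := fun t : Icc (0:ℝ) 1 => |y t|)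
      ⟨B, by rintro _ ⟨u, rfl⟩; exact hB u u.2⟩ ⟨t, ht⟩
  have hy''M : ∀ t ∈ Icc (0:ℝ) 1, |y'' t| ≤ ε ^ 2 * (p * M + G) := fun t ht => by
    rw [hy.ode t ht, abs_mul, abs_of_nonneg (sq_nonneg ε)]
    gcongr
    calc |p * y t + g t| ≤ |p * y t| + |g t| := abs_add_le _ _
      _ ≤ p * M + G := by
        rw [abs_mul, abs_of_pos hp]
        gcongr
        exacts [hyM t ht, hG t ht]
  obtain ⟨τ, hτ, hyτ⟩ := exists_eq_zero_of_intervalIntegral_eq_zero zero_lt_one hy.continuousOn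
    (hy.integral_eq_zero hp.ne' hε hg hg0)
  have hMle : M ≤ ε ^ 2 * (p * M + G) := ciSup_le fun t =>
    abs_le_of_abs_second_deriv_le hy.hasDerivWithinAt hy.hasDerivWithinAt_deriv hτ hyτ
      (left_mem_Icc.2 zero_le_one) hy.deriv_zero hy''M t t.2
  nlinarith [mul_le_mul_of_nonneg_right hεp hM0]

end IsNeumannSolution

/-- if for each sufficiently small `ε > 0` the function `x^ε` is a
C² solution of `ẍ^ε = ε²(p·x^ε + f)` on `[0,1]` with Neumann boundary conditions
`ẋ^ε(0) = ẋ^ε(1) = 0`, then `x^ε` converges uniformly on `[0,1]` to the constant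
`−(1/p)∫₀¹ f(s) ds` as `ε → 0⁺`. -/
theorem neumann_averaging_limit (p : ℝ) (hp : 0 < p)
    (f : ℝ → ℝ) (hf : ContinuousOn f (Set.Icc (0:ℝ) 1))
    (x x' x'' : ℝ → ℝ → ℝ) (ε₁ : ℝ) (hε₁ : 0 < ε₁)
    (hsol : ∀ ε ∈ Set.Ioc (0:ℝ) ε₁,
      (∀ t ∈ Set.Icc (0:ℝ) 1, HasDerivWithinAt (x ε) (x' ε t) (Set.Icc (0:ℝ) 1) t) ∧
      (∀ t ∈ Set.Icc (0:ℝ) 1, HasDerivWithinAt (x' ε) (x'' ε t) (Set.Icc (0:ℝ) 1) t) ∧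
      ContinuousOn (x' ε) (Set.Icc (0:ℝ) 1) ∧
      ContinuousOn (x'' ε) (Set.Icc (0:ℝ) 1) ∧
      (∀ t ∈ Set.Icc (0:ℝ) 1, x'' ε t = ε ^ 2 * (p * x ε t + f t)) ∧
      x' ε 0 = 0 ∧ x' ε 1 = 0) :
    Tendsto
      (fun ε : ℝ => ⨆ t : Set.Icc (0:ℝ) 1,
        |x ε t + (1 / p) * ∫ s in (0:ℝ)..1, f s|)
      (nhdsWithin 0 (Set.Ioi 0)) (nhds 0) := by
  set m := ∫ s in (0:ℝ)..1, f s
  have hg : ContinuousOn (fun t => f t - m) (Icc 0 1) := hf.sub continuousOn_const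
  have hg0 : ∫ t in (0:ℝ)..1, (f t - m) = 0 := by
    simp [intervalIntegral.integral_sub (hf.intervalIntegrable_of_Icc zero_le_one), m]
  obtain ⟨G, hG⟩ := isCompact_Icc.exists_bound_of_continuousOn hg
  have hsmall : ∀ᶠ ε in nhdsWithin (0:ℝ) (Ioi 0), ε ^ 2 * p ≤ 1 / 2 :=
    ((continuous_pow 2).mul continuous_const).tendsto' 0 0 (by simp)
      |>.mono_left nhdsWithin_le_nhds |>.eventually (ge_mem_nhds (by norm_num))
  refine squeeze_zero' (Eventually.of_forall fun ε => Real.iSup_nonneg fun _ => abs_nonneg _) ?_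
    (((continuous_const.mul (continuous_pow 2)).mul continuous_const).tendsto' 0 0 (by simp)
      |>.mono_left nhdsWithin_le_nhds : Tendsto (fun ε : ℝ => 2 * ε ^ 2 * G) _ _)
  filter_upwards [Ioc_mem_nhdsGT hε₁, hsmall] with ε hε hεp
  obtain ⟨hx, hx', -, -, hode, h0, h1⟩ := hsol ε hε
  refine IsNeumannSolution.iSup_abs_le (y := fun t => x ε t + 1 / p * m) (y' := x' ε)
    (y'' := x'' ε) ⟨fun t ht => (hx t ht).add_const _, hx', fun t ht => ?_, h0, h1⟩
    hp hε.1.ne' hεp hg hg0 hG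
  rw [hode t ht]
  field_simp
  ring
end

section
/- Let p > 0 and f : [0,1] → ℝ be continuous. Suppose that for each sufficiently small ε > 0, x^ε : [0,1] → ℝ is a twice continuously differentiable function satisfying ẍ^ε(t) = ε²·(p·x^ε(t) + f(t)) for all t ∈ [0,1] with periodic boundary conditions x^ε(0) = x^ε(1) and ẋ^ε(0) = ẋ^ε(1). Then sup_{0≤t≤1} |x^ε(t) + (1/p)·∫₀¹ f(s) ds| → 0 as ε → 0⁺. -/
open Filter Set MeasureTheory

/-!
Write `y = x^ε + (1/p)∫₀¹ f`, so that `ẍ^ε = ε² (p y + (f - ∫₀¹ f))`. Integrating the equation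
over a period kills the left side, so `y` has mean zero and vanishes somewhere; by Rolle `ẋ^ε`
vanishes somewhere too. Two applications of the mean value inequality then give
`sup |y| ≤ sup |ẍ^ε| ≤ ε² (p · sup |y| + sup |f - ∫₀¹ f|)`, and for `ε² p ≤ 1/2` this yields
`sup |y| ≤ 2 ε² sup |f - ∫₀¹ f|`.
-/

section Icc

variable {a b : ℝ} {g g' : ℝ → ℝ}

theorem hasDerivAt_of_hasDerivWithinAt_Icc
    (hg : ∀ t ∈ Icc a b, HasDerivWithinAt g (g' t) (Icc a b) t) {t : ℝ} (ht : t ∈ Ioo a b) :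
    HasDerivAt g (g' t) t :=
  (hg t (Ioo_subset_Icc_self ht)).hasDerivAt (Icc_mem_nhds ht.1 ht.2)

theorem continuousOn_of_hasDerivWithinAt_Icc
    (hg : ∀ t ∈ Icc a b, HasDerivWithinAt g (g' t) (Icc a b) t) : ContinuousOn g (Icc a b) :=
  fun t ht => (hg t ht).continuousWithinAt

theorem integral_eq_sub_of_hasDerivWithinAt_Icc (hab : a ≤ b)
    (hg : ∀ t ∈ Icc a b, HasDerivWithinAt g (g' t) (Icc a b) t)
    (hg' : IntervalIntegrable g' volume a b) :
    ∫ t in a..b, g' t = g b - g a :=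
  intervalIntegral.integral_eq_sub_of_hasDerivAt_of_le hab
    (continuousOn_of_hasDerivWithinAt_Icc hg) (fun _ ht => hasDerivAt_of_hasDerivWithinAt_Icc hg ht)
    hg'

theorem exists_mem_Ioo_eq_zero_of_hasDerivWithinAt_Icc (hab : a < b)
    (hg : ∀ t ∈ Icc a b, HasDerivWithinAt g (g' t) (Icc a b) t) (hgab : g a = g b) :
    ∃ t ∈ Ioo a b, g' t = 0 :=
  exists_hasDerivAt_eq_zero hab (continuousOn_of_hasDerivWithinAt_Icc hg) hgab
    fun _ ht => hasDerivAt_of_hasDerivWithinAt_Icc hg ht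

theorem abs_le_mul_of_hasDerivWithinAt_Icc_of_eq_zero {C t₀ t : ℝ}
    (hg : ∀ t ∈ Icc a b, HasDerivWithinAt g (g' t) (Icc a b) t)
    (hbound : ∀ t ∈ Icc a b, |g' t| ≤ C) (ht₀ : t₀ ∈ Icc a b) (hzero : g t₀ = 0)
    (ht : t ∈ Icc a b) : |g t| ≤ C * (b - a) := by
  have hlip := (convex_Icc a b).norm_image_sub_le_of_norm_hasDerivWithin_le hg hbound ht₀ ht
  rw [Real.norm_eq_abs, Real.norm_eq_abs, hzero, sub_zero] at hlip
  have hdist : |t - t₀| ≤ b - a :=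
    abs_sub_le_iff.2 ⟨by linarith [ht.2, ht₀.1], by linarith [ht.1, ht₀.2]⟩
  exact hlip.trans (mul_le_mul_of_nonneg_left hdist ((abs_nonneg _).trans (hbound t ht)))

end Icc

section PeriodicSolution

variable {p ε M : ℝ} {f X X' : ℝ → ℝ}

theorem mul_integral_add_integral_eq_zero_of_periodic (hε : ε ≠ 0)
    (hf : ContinuousOn f (Icc 0 1))
    (hX : ∀ t ∈ Icc (0:ℝ) 1, HasDerivWithinAt X (X' t) (Icc 0 1) t)
    (hX' : ∀ t ∈ Icc (0:ℝ) 1, HasDerivWithinAt X' (ε ^ 2 * (p * X t + f t)) (Icc 0 1) t)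
    (hper' : X' 0 = X' 1) :
    p * (∫ t in (0:ℝ)..1, X t) + ∫ t in (0:ℝ)..1, f t = 0 := by
  have hXint : IntervalIntegrable X volume 0 1 :=
    (continuousOn_of_hasDerivWithinAt_Icc hX).intervalIntegrable_of_Icc zero_le_one
  have hfint : IntervalIntegrable f volume 0 1 := hf.intervalIntegrable_of_Icc zero_le_one
  have hftc := integral_eq_sub_of_hasDerivWithinAt_Icc zero_le_one hX'
    (((hXint.const_mul p).add hfint).const_mul (ε ^ 2))
  rw [hper', sub_self, intervalIntegral.integral_const_mul,
    intervalIntegral.integral_add (hXint.const_mul p) hfint,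
    intervalIntegral.integral_const_mul] at hftc
  exact (mul_eq_zero.1 hftc).resolve_left (pow_ne_zero 2 hε)

theorem exists_add_integral_eq_zero_of_periodic (hp : p ≠ 0) (hε : ε ≠ 0)
    (hf : ContinuousOn f (Icc 0 1))
    (hX : ∀ t ∈ Icc (0:ℝ) 1, HasDerivWithinAt X (X' t) (Icc 0 1) t)
    (hX' : ∀ t ∈ Icc (0:ℝ) 1, HasDerivWithinAt X' (ε ^ 2 * (p * X t + f t)) (Icc 0 1) t)
    (hper' : X' 0 = X' 1) :
    ∃ t₀ ∈ Icc (0:ℝ) 1, X t₀ + (1 / p) * ∫ s in (0:ℝ)..1, f s = 0 := by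
  set c := (1 / p) * ∫ s in (0:ℝ)..1, f s with hc
  have hXc : ContinuousOn X (Icc 0 1) := continuousOn_of_hasDerivWithinAt_Icc hX
  obtain ⟨t₀, ht₀, hmean⟩ := exists_eq_interval_average (f := fun t => X t + c)
    zero_ne_one ((hXc.add continuousOn_const).mono (uIcc_of_le zero_le_one).subset)
  refine ⟨t₀, uIcc_of_le (zero_le_one (α := ℝ)) ▸ uIoo_subset_uIcc_self ht₀, ?_⟩
  have hintegral := mul_integral_add_integral_eq_zero_of_periodic hε hf hX hX' hper'
  rw [hmean, interval_average_eq_div, intervalIntegral.integral_add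
    (hXc.intervalIntegrable_of_Icc zero_le_one) intervalIntegrable_const,
    intervalIntegral.integral_const, sub_zero, one_smul, div_one, hc]
  field_simp
  linarith

theorem abs_add_integral_le_of_periodic (hp : 0 < p) (hε : ε ≠ 0) (hsmall : ε ^ 2 * p ≤ 1 / 2)
    (hf : ContinuousOn f (Icc 0 1))
    (hM : ∀ t ∈ Icc (0:ℝ) 1, |f t - ∫ s in (0:ℝ)..1, f s| ≤ M)
    (hX : ∀ t ∈ Icc (0:ℝ) 1, HasDerivWithinAt X (X' t) (Icc 0 1) t)
    (hX' : ∀ t ∈ Icc (0:ℝ) 1, HasDerivWithinAt X' (ε ^ 2 * (p * X t + f t)) (Icc 0 1) t)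
    (hper : X 0 = X 1) (hper' : X' 0 = X' 1) {t : ℝ} (ht : t ∈ Icc (0:ℝ) 1) :
    |X t + (1 / p) * ∫ s in (0:ℝ)..1, f s| ≤ 2 * ε ^ 2 * M := by
  set c := (1 / p) * ∫ s in (0:ℝ)..1, f s with hc
  have hpc : p * c = ∫ s in (0:ℝ)..1, f s := by rw [hc]; field_simp
  have hXc : ContinuousOn X (Icc 0 1) := continuousOn_of_hasDerivWithinAt_Icc hX
  have hy : ∀ t ∈ Icc (0:ℝ) 1, HasDerivWithinAt (fun t => X t + c) (X' t) (Icc 0 1) t :=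
    fun t ht => (hX t ht).add_const c
  obtain ⟨t₀, ht₀, hy₀⟩ := exists_add_integral_eq_zero_of_periodic hp.ne' hε hf hX hX' hper'
  obtain ⟨t₁, ht₁, hX'₁⟩ := exists_mem_Ioo_eq_zero_of_hasDerivWithinAt_Icc zero_lt_one hX hper
  obtain ⟨tₘ, htₘ, hmax⟩ := isCompact_Icc.exists_isMaxOn (nonempty_Icc.2 zero_le_one)
    (hXc.add continuousOn_const).abs
  set S := |X tₘ + c|
  have hX''_le : ∀ t ∈ Icc (0:ℝ) 1, |ε ^ 2 * (p * X t + f t)| ≤ ε ^ 2 * (p * S + M) := by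
    intro t ht
    have hsplit : p * X t + f t = p * (X t + c) + (f t - ∫ s in (0:ℝ)..1, f s) := by
      rw [← hpc]; ring
    rw [abs_mul, abs_of_nonneg (sq_nonneg ε), hsplit]
    gcongr
    calc |p * (X t + c) + (f t - ∫ s in (0:ℝ)..1, f s)|
        ≤ |p * (X t + c)| + |f t - ∫ s in (0:ℝ)..1, f s| := abs_add_le _ _
      _ ≤ p * S + M := by
        rw [abs_mul, abs_of_pos hp]
        gcongr
        · exact hmax ht
        · exact hM t ht
  have hX'_le : ∀ t ∈ Icc (0:ℝ) 1, |X' t| ≤ ε ^ 2 * (p * S + M) := fun t ht => by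
    simpa using abs_le_mul_of_hasDerivWithinAt_Icc_of_eq_zero hX' hX''_le
      (Ioo_subset_Icc_self ht₁) hX'₁ ht
  have hS : S ≤ ε ^ 2 * (p * S + M) := by
    simpa using abs_le_mul_of_hasDerivWithinAt_Icc_of_eq_zero hy hX'_le ht₀ hy₀ htₘ
  have hS_nonneg : 0 ≤ S := abs_nonneg _
  calc |X t + c| ≤ S := hmax ht
    _ ≤ 2 * ε ^ 2 * M := by nlinarith [mul_le_mul_of_nonneg_right hsmall hS_nonneg]

end PeriodicSolution

/-- if for each sufficiently small `ε > 0` the function `x^ε` is a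
C² solution of `ẍ^ε = ε²(p·x^ε + f)` on `[0,1]` with periodic boundary
conditions `x^ε(0) = x^ε(1)`, `ẋ^ε(0) = ẋ^ε(1)`, then `x^ε` converges uniformly
on `[0,1]` to the constant `−(1/p)∫₀¹ f(s) ds` as `ε → 0⁺`. -/
theorem periodic_averaging_limit (p : ℝ) (hp : 0 < p)
    (f : ℝ → ℝ) (hf : ContinuousOn f (Set.Icc (0:ℝ) 1))
    (x x' x'' : ℝ → ℝ → ℝ) (ε₁ : ℝ) (hε₁ : 0 < ε₁)
    (hsol : ∀ ε ∈ Set.Ioc (0:ℝ) ε₁,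
      (∀ t ∈ Set.Icc (0:ℝ) 1, HasDerivWithinAt (x ε) (x' ε t) (Set.Icc (0:ℝ) 1) t) ∧
      (∀ t ∈ Set.Icc (0:ℝ) 1, HasDerivWithinAt (x' ε) (x'' ε t) (Set.Icc (0:ℝ) 1) t) ∧
      ContinuousOn (x' ε) (Set.Icc (0:ℝ) 1) ∧
      ContinuousOn (x'' ε) (Set.Icc (0:ℝ) 1) ∧
      (∀ t ∈ Set.Icc (0:ℝ) 1, x'' ε t = ε ^ 2 * (p * x ε t + f t)) ∧
      x ε 0 = x ε 1 ∧ x' ε 0 = x' ε 1) :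
    Tendsto
      (fun ε : ℝ => ⨆ t : Set.Icc (0:ℝ) 1,
        |x ε t + (1 / p) * ∫ s in (0:ℝ)..1, f s|)
      (nhdsWithin 0 (Set.Ioi 0)) (nhds 0) := by
  obtain ⟨M, hM⟩ := isCompact_Icc.exists_bound_of_continuousOn
    (hf.sub (continuousOn_const (c := ∫ s in (0:ℝ)..1, f s)))
  have hsmall : ∀ᶠ ε in nhds (0:ℝ), ε ^ 2 * p ≤ 1 / 2 :=
    (continuous_id.pow 2 |>.mul continuous_const).tendsto' 0 0 (by simp)
      |>.eventually (ge_mem_nhds (by norm_num))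
  have hbound : ∀ᶠ ε in nhdsWithin 0 (Set.Ioi 0),
      ⨆ t : Set.Icc (0:ℝ) 1, |x ε t + (1 / p) * ∫ s in (0:ℝ)..1, f s| ≤ 2 * ε ^ 2 * M := by
    filter_upwards [Ioc_mem_nhdsGT hε₁, nhdsWithin_le_nhds hsmall] with ε hε hεp
    obtain ⟨hx, hx', -, -, heq, hper, hper'⟩ := hsol ε hε
    have : Nonempty (Set.Icc (0:ℝ) 1) := ⟨⟨0, left_mem_Icc.2 zero_le_one⟩⟩
    exact ciSup_le fun t => abs_add_integral_le_of_periodic hp hε.1.ne' hεp hf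
      (fun t ht => by simpa using hM t ht) hx (fun t ht => heq t ht ▸ hx' t ht) hper hper' t.2
  refine squeeze_zero' (Eventually.of_forall fun ε => Real.iSup_nonneg fun t => abs_nonneg _)
    hbound ?_
  exact ((continuous_const.mul (continuous_id.pow 2)).mul continuous_const).tendsto' 0 0
    (by simp) |>.mono_left nhdsWithin_le_nhds
end

section
/- Let p > 0, let f : [0,1] → ℝ be continuous, and let B : [0,1] × ℝ → ℝ be continuous and bounded (sup |B| = β* < ∞), differentiable in x with sup_{t,x} |∂B/∂x(t,x)| = β < p and with ∂B/∂x uniformly continuous in x uniformly in t. Define Υ(t,s) = -min(t,s)·(1-max(t,s)) and κ(t) = ∫₀¹ Υ(t,s)·(B(s,0) + f(s)) ds. Suppose that for each sufficiently small ε > 0, x^ε : [0,1] → ℝ is a twice continuously differentiable function satisfying ẍ^ε(t) = ε²·(p·x^ε(t) + B(t,x^ε(t)) + f(t)) for all t ∈ [0,1] with x^ε(0) = x^ε(1) = 0. Then sup_{0≤t≤1} |ε⁻²·x^ε(t) − κ(t)| → 0 as ε → 0⁺. -/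
/-!
Writing `Υ` for the Green function of `u ↦ ü` with Dirichlet conditions on `[0,1]`, the solution
satisfies `x^ε = ε² ∫ Υ(·,s) (p x^ε + B(s,x^ε) + f) ds`. Since `|Υ| ≤ 1/4` and, by the mean
value theorem, `|p y + B(s,y) - B(s,0)| ≤ (p + β)|y|`, this gives the a priori bound
`sup |x^ε| = O(ε²)` for small `ε`, and then
`ε⁻² x^ε - κ = ∫ Υ(·,s) (p x^ε + B(s,x^ε) - B(s,0)) ds = O(ε²)` uniformly on `[0,1]`.
-/

open Filter Set MeasureTheory intervalIntegral Topology

noncomputable section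

def dirichletGreen (t s : ℝ) : ℝ := -(min t s * (1 - max t s))

lemma continuous_dirichletGreen (t : ℝ) : Continuous (dirichletGreen t) := by
  unfold dirichletGreen; fun_prop

lemma dirichletGreen_of_le {t s : ℝ} (h : s ≤ t) : dirichletGreen t s = -(1 - t) * s := by
  rw [dirichletGreen, min_eq_right h, max_eq_left h]; ring

lemma dirichletGreen_of_ge {t s : ℝ} (h : t ≤ s) : dirichletGreen t s = -t * (1 - s) := by
  rw [dirichletGreen, min_eq_left h, max_eq_right h]; ring

lemma abs_dirichletGreen_le {t s : ℝ} (ht : t ∈ Icc (0:ℝ) 1) (hs : s ∈ Icc (0:ℝ) 1) :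
    |dirichletGreen t s| ≤ 1 / 4 := by
  have h1 : 0 ≤ min t s := le_min ht.1 hs.1
  have h2 : max t s ≤ 1 := max_le ht.2 hs.2
  have h3 : min t s ≤ max t s := min_le_max
  rw [dirichletGreen, abs_neg, abs_of_nonneg (mul_nonneg h1 (by linarith))]
  nlinarith [sq_nonneg (2 * min t s - 1)]

lemma intervalIntegrable_dirichletGreen_mul {g : ℝ → ℝ} (t : ℝ)
    (hg : ContinuousOn g (Icc 0 1)) :
    IntervalIntegrable (fun s => dirichletGreen t s * g s) volume 0 1 :=
  ((continuous_dirichletGreen t).continuousOn.mul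
    (by rwa [uIcc_of_le zero_le_one])).intervalIntegrable

lemma abs_integral_dirichletGreen_mul_le {g : ℝ → ℝ} {K t : ℝ} (ht : t ∈ Icc (0:ℝ) 1)
    (hg : ∀ s ∈ Icc (0:ℝ) 1, |g s| ≤ K) :
    |∫ s in (0:ℝ)..1, dirichletGreen t s * g s| ≤ K / 4 := by
  have hK : 0 ≤ K := (abs_nonneg _).trans (hg 0 (left_mem_Icc.2 zero_le_one))
  have := norm_integral_le_of_norm_le_const (a := 0) (b := 1) (C := 1 / 4 * K)
    (f := fun s => dirichletGreen t s * g s) fun s hs => by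
      rw [uIoc_of_le zero_le_one] at hs
      rw [Real.norm_eq_abs, abs_mul]
      exact mul_le_mul (abs_dirichletGreen_le ht (Ioc_subset_Icc_self hs))
        (hg s (Ioc_subset_Icc_self hs)) (abs_nonneg _) (by norm_num)
  simpa [div_eq_inv_mul] using this

lemma integral_eq_sub_of_hasDerivWithinAt_Icc_s19 {u w : ℝ → ℝ} {a b c d : ℝ}
    (hu : ∀ s ∈ Icc c d, HasDerivWithinAt u (w s) (Icc c d) s) (hw : ContinuousOn w (Icc c d))
    (hca : c ≤ a) (hab : a ≤ b) (hbd : b ≤ d) :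
    ∫ s in a..b, w s = u b - u a := by
  have hsub : Icc a b ⊆ Icc c d := Icc_subset_Icc hca hbd
  refine integral_eq_sub_of_hasDerivAt_of_le hab
    (fun s hs => ((hu s (hsub hs)).continuousWithinAt).mono hsub) (fun s hs => ?_)
    ((hw.mono (by rwa [uIcc_of_le hab])).intervalIntegrable)
  exact (hu s (hsub (Ioo_subset_Icc_self hs))).hasDerivAt
    (Icc_mem_nhds (hca.trans_lt hs.1) (hs.2.trans_le hbd))

lemma abs_mul_add_sub_le {p β : ℝ} {φ φ' : ℝ → ℝ} (hp : 0 ≤ p)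
    (hφ : ∀ y, HasDerivAt φ (φ' y) y) (hφ' : ∀ y, |φ' y| ≤ β) (y : ℝ) :
    |p * y + φ y - φ 0| ≤ (p + β) * |y| := by
  have hlip : |φ y - φ 0| ≤ β * |y| := by
    simpa using Convex.norm_image_sub_le_of_norm_hasDerivWithin_le
      (fun z _ => (hφ z).hasDerivWithinAt) (fun z _ => hφ' z) convex_univ
      (mem_univ 0) (mem_univ y)
  calc |p * y + φ y - φ 0| ≤ |p * y| + |φ y - φ 0| := by
        rw [add_sub_assoc]; exact abs_add_le _ _
    _ ≤ (p + β) * |y| := by rw [abs_mul, abs_of_nonneg hp]; linarith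

section Green

variable {v v' v'' : ℝ → ℝ}
  (hv : ∀ t ∈ Icc (0:ℝ) 1, HasDerivWithinAt v (v' t) (Icc 0 1) t)
  (hv' : ∀ t ∈ Icc (0:ℝ) 1, HasDerivWithinAt v' (v'' t) (Icc 0 1) t)
  (hv''c : ContinuousOn v'' (Icc 0 1))
include hv hv' hv''c

lemma integral_dirichletGreen_mul_left (hv0 : v 0 = 0) {t : ℝ} (ht : t ∈ Icc (0:ℝ) 1) :
    ∫ s in (0:ℝ)..t, dirichletGreen t s * v'' s = -(1 - t) * (t * v' t - v t) := by
  have hftc := integral_eq_sub_of_hasDerivWithinAt_Icc_s19 (u := fun s => s * v' s - v s)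
    (w := fun s => s * v'' s) (fun s hs => by
      exact (((hasDerivWithinAt_id s _).mul (hv' s hs)).sub (hv s hs)).congr_deriv
        (by simp)) (by fun_prop) le_rfl ht.1 ht.2
  rw [integral_congr (g := fun s => -(1 - t) * (s * v'' s)) fun s hs => by
      rw [uIcc_of_le ht.1] at hs
      simp only [dirichletGreen_of_le hs.2]; ring,
    intervalIntegral.integral_const_mul, hftc, hv0]
  ring

lemma integral_dirichletGreen_mul_right (hv1 : v 1 = 0) {t : ℝ} (ht : t ∈ Icc (0:ℝ) 1) :
    ∫ s in t..(1:ℝ), dirichletGreen t s * v'' s = t * ((1 - t) * v' t + v t) := by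
  have hftc := integral_eq_sub_of_hasDerivWithinAt_Icc_s19 (u := fun s => (1 - s) * v' s + v s)
    (w := fun s => (1 - s) * v'' s) (fun s hs => by
      exact ((((hasDerivWithinAt_id s _).const_sub 1).mul (hv' s hs)).add (hv s hs)).congr_deriv
        (by simp)) (by fun_prop) ht.1 ht.2 le_rfl
  rw [integral_congr (g := fun s => -t * ((1 - s) * v'' s)) fun s hs => by
      rw [uIcc_of_le ht.2] at hs
      simp only [dirichletGreen_of_ge hs.1]; ring,
    intervalIntegral.integral_const_mul, hftc, hv1]
  ring

lemma eq_integral_dirichletGreen_mul (hv0 : v 0 = 0) (hv1 : v 1 = 0) {t : ℝ}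
    (ht : t ∈ Icc (0:ℝ) 1) :
    v t = ∫ s in (0:ℝ)..1, dirichletGreen t s * v'' s := by
  have hint : ∀ a b, 0 ≤ a → a ≤ b → b ≤ 1 →
      IntervalIntegrable (fun s => dirichletGreen t s * v'' s) volume a b := fun a b ha hab hb =>
    ((continuous_dirichletGreen t).continuousOn.mul
      (hv''c.mono (by rw [uIcc_of_le hab]; exact Icc_subset_Icc ha hb))).intervalIntegrable
  rw [← integral_add_adjacent_intervals (hint 0 t le_rfl ht.1 ht.2) (hint t 1 ht.1 ht.2 le_rfl),
    integral_dirichletGreen_mul_left hv hv' hv''c hv0 ht,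
    integral_dirichletGreen_mul_right hv hv' hv''c hv1 ht]
  ring

end Green

section Estimate

variable {v v' v'' h : ℝ → ℝ} {g : ℝ → ℝ → ℝ} {ε L H : ℝ}
  (hv : ∀ t ∈ Icc (0:ℝ) 1, HasDerivWithinAt v (v' t) (Icc 0 1) t)
  (hv' : ∀ t ∈ Icc (0:ℝ) 1, HasDerivWithinAt v' (v'' t) (Icc 0 1) t)
  (hv''c : ContinuousOn v'' (Icc 0 1)) (hv0 : v 0 = 0) (hv1 : v 1 = 0)
  (hv'' : ∀ s ∈ Icc (0:ℝ) 1, v'' s = ε ^ 2 * (g s (v s) + h s))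
  (hg : ∀ s ∈ Icc (0:ℝ) 1, ∀ y, |g s y| ≤ L * |y|)
  (hH : ∀ s ∈ Icc (0:ℝ) 1, |h s| ≤ H) (hεL : ε ^ 2 * L ≤ 2)
include hv hv' hv''c hv0 hv1 hv'' hg hH hεL

lemma abs_le_sq_mul_of_dirichlet_problem {s : ℝ} (hs : s ∈ Icc (0:ℝ) 1) :
    |v s| ≤ ε ^ 2 * H / 2 := by
  have hL : 0 ≤ L := by simpa using (abs_nonneg _).trans (hg 0 (left_mem_Icc.2 zero_le_one) 1)
  have hvc : ContinuousOn v (Icc 0 1) := fun s hs => (hv s hs).continuousWithinAt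
  obtain ⟨t₀, ht₀, hmax⟩ :=
    isCompact_Icc.exists_isMaxOn (nonempty_Icc.2 zero_le_one) hvc.abs
  have hM : |v t₀| ≤ ε ^ 2 * (L * |v t₀| + H) / 4 := by
    refine (congrArg abs (eq_integral_dirichletGreen_mul hv hv' hv''c hv0 hv1 ht₀)).trans_le ?_
    refine abs_integral_dirichletGreen_mul_le ht₀ fun s hs => ?_
    rw [hv'' s hs, abs_mul, abs_of_nonneg (sq_nonneg ε)]
    gcongr
    calc |g s (v s) + h s| ≤ |g s (v s)| + |h s| := abs_add_le _ _
      _ ≤ L * |v t₀| + H :=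
        add_le_add ((hg s hs _).trans (mul_le_mul_of_nonneg_left (hmax hs) hL)) (hH s hs)
  have := mul_le_mul_of_nonneg_right hεL (abs_nonneg (v t₀))
  exact (hmax hs).trans (by nlinarith)

lemma abs_inv_sq_mul_sub_integral_dirichletGreen_le (hhc : ContinuousOn h (Icc 0 1))
    (hε : ε ≠ 0) {t : ℝ} (ht : t ∈ Icc (0:ℝ) 1) :
    |ε⁻¹ ^ 2 * v t - ∫ s in (0:ℝ)..1, dirichletGreen t s * h s| ≤
      ε ^ 2 * (L * H / 8) := by
  have hL : 0 ≤ L := by simpa using (abs_nonneg _).trans (hg 0 (left_mem_Icc.2 zero_le_one) 1)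
  have hdiff : ε⁻¹ ^ 2 * v t - ∫ s in (0:ℝ)..1, dirichletGreen t s * h s =
      ∫ s in (0:ℝ)..1, dirichletGreen t s * g s (v s) := by
    rw [eq_integral_dirichletGreen_mul hv hv' hv''c hv0 hv1 ht,
      ← intervalIntegral.integral_const_mul,
      ← integral_sub ((intervalIntegrable_dirichletGreen_mul t hv''c).const_mul _)
        (intervalIntegrable_dirichletGreen_mul t hhc)]
    refine integral_congr fun s hs => ?_
    rw [uIcc_of_le zero_le_one] at hs
    simp only [hv'' s hs]
    field_simp
    ring
  rw [hdiff]
  calc _ ≤ L * (ε ^ 2 * H / 2) / 4 := abs_integral_dirichletGreen_mul_le ht fun s hs =>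
        (hg s hs _).trans (mul_le_mul_of_nonneg_left
          (abs_le_sq_mul_of_dirichlet_problem hv hv' hv''c hv0 hv1 hv'' hg hH hεL hs) hL)
    _ = ε ^ 2 * (L * H / 8) := by ring

end Estimate

end

theorem dirichlet_averaging_limit_general (p β : ℝ) (hp : 0 < p)
    (f : ℝ → ℝ) (hf : ContinuousOn f (Set.Icc (0:ℝ) 1))
    (B : ℝ → ℝ → ℝ)
    (hBcont : ContinuousOn (fun q : ℝ × ℝ => B q.1 q.2) (Set.Icc (0:ℝ) 1 ×ˢ Set.univ))
    (B' : ℝ → ℝ → ℝ)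
    (hBderiv : ∀ t ∈ Set.Icc (0:ℝ) 1, ∀ y : ℝ, HasDerivAt (fun z => B t z) (B' t y) y)
    (hB'bd : ∀ t ∈ Set.Icc (0:ℝ) 1, ∀ y : ℝ, |B' t y| ≤ β)
    (κ : ℝ → ℝ)
    (hκ : ∀ t, κ t = ∫ s in (0:ℝ)..1,
      -(min t s * (1 - max t s)) * (B s 0 + f s))
    (x x' x'' : ℝ → ℝ → ℝ) (ε₁ : ℝ) (hε₁ : 0 < ε₁)
    (hsol : ∀ ε ∈ Set.Ioc (0:ℝ) ε₁,
      (∀ t ∈ Set.Icc (0:ℝ) 1, HasDerivWithinAt (x ε) (x' ε t) (Set.Icc (0:ℝ) 1) t) ∧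
      (∀ t ∈ Set.Icc (0:ℝ) 1, HasDerivWithinAt (x' ε) (x'' ε t) (Set.Icc (0:ℝ) 1) t) ∧
      ContinuousOn (x' ε) (Set.Icc (0:ℝ) 1) ∧
      ContinuousOn (x'' ε) (Set.Icc (0:ℝ) 1) ∧
      (∀ t ∈ Set.Icc (0:ℝ) 1,
        x'' ε t = ε ^ 2 * (p * x ε t + B t (x ε t) + f t)) ∧
      x ε 0 = 0 ∧ x ε 1 = 0) :
    Tendsto
      (fun ε : ℝ => ⨆ t : Set.Icc (0:ℝ) 1, |ε⁻¹ ^ 2 * x ε t - κ t|)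
      (nhdsWithin 0 (Set.Ioi 0)) (nhds 0) := by
  have hh : ContinuousOn (fun s => B s 0 + f s) (Icc 0 1) :=
    (hBcont.comp (continuousOn_id.prodMk continuousOn_const) fun s hs => ⟨hs, trivial⟩).add hf
  obtain ⟨H, hH⟩ := isCompact_Icc.exists_bound_of_continuousOn hh
  have hsq : ∀ c : ℝ, Tendsto (fun ε : ℝ => ε ^ 2 * c) (𝓝[>] 0) (𝓝 0) := fun c =>
    tendsto_nhdsWithin_of_tendsto_nhds (by simpa using (continuous_pow 2 |>.mul_const c).tendsto 0)
  have hsmall : ∀ᶠ ε in 𝓝[>] 0, ε ∈ Ioc 0 ε₁ ∧ ε ^ 2 * (p + β) ≤ 2 :=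
    Filter.Eventually.and (Ioc_mem_nhdsGT hε₁)
      ((hsq (p + β)).eventually (Iic_mem_nhds two_pos))
  have := nonempty_Icc_subtype (zero_le_one' ℝ)
  refine squeeze_zero' (Eventually.of_forall fun ε => Real.iSup_nonneg fun t => abs_nonneg _)
    (hsmall.mono fun ε ⟨hε, hεL⟩ => ciSup_le fun t => ?_) (hsq ((p + β) * H / 8))
  obtain ⟨hd, hd', -, hc'', heq, hx0, hx1⟩ := hsol ε hε
  rw [hκ]
  exact abs_inv_sq_mul_sub_integral_dirichletGreen_le (g := fun s y => p * y + B s y - B s 0)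
    hd hd' hc'' hx0 hx1 (fun s hs => by rw [heq s hs]; ring)
    (fun s hs => abs_mul_add_sub_le hp.le (hBderiv s hs) (hB'bd s hs))
    (fun s hs => by simpa using hH s hs) hεL hh hε.1.ne' t.2

/-- deterministic averaging theorem for the Dirichlet problem.
Under conditions C₁–C₂ on `B` (bounded by `β*`, with `|∂B/∂x| ≤ β < p` and
`∂B/∂x` uniformly continuous in `x` uniformly in `t`), if for each sufficiently
small `ε > 0` the function `x^ε` is a C² solution of
`ẍ^ε = ε²(p·x^ε + B(t,x^ε) + f)` on `[0,1]` with `x^ε(0) = x^ε(1) = 0`, then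
`ε⁻²·x^ε` converges uniformly on `[0,1]` to
`κ(t) = ∫₀¹ Υ(t,s)(B(s,0) + f(s)) ds`, where `Υ(t,s) = -min(t,s)(1-max(t,s))`. -/
theorem dirichlet_averaging_limit (p βstar β : ℝ) (hp : 0 < p)
    (f : ℝ → ℝ) (hf : ContinuousOn f (Set.Icc (0:ℝ) 1))
    (B : ℝ → ℝ → ℝ)
    (hBcont : ContinuousOn (fun q : ℝ × ℝ => B q.1 q.2) (Set.Icc (0:ℝ) 1 ×ˢ Set.univ))
    (hBbd : ∀ t ∈ Set.Icc (0:ℝ) 1, ∀ y : ℝ, |B t y| ≤ βstar)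
    (B' : ℝ → ℝ → ℝ)
    (hBderiv : ∀ t ∈ Set.Icc (0:ℝ) 1, ∀ y : ℝ, HasDerivAt (fun z => B t z) (B' t y) y)
    (hB'bd : ∀ t ∈ Set.Icc (0:ℝ) 1, ∀ y : ℝ, |B' t y| ≤ β)
    (hβ : β < p)
    (hB'uc : ∀ η : ℝ, 0 < η → ∃ δ : ℝ, 0 < δ ∧
      ∀ t ∈ Set.Icc (0:ℝ) 1, ∀ y z : ℝ, |y - z| ≤ δ → |B' t y - B' t z| ≤ η)
    (κ : ℝ → ℝ)
    (hκ : ∀ t, κ t = ∫ s in (0:ℝ)..1,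
      -(min t s * (1 - max t s)) * (B s 0 + f s))
    (x x' x'' : ℝ → ℝ → ℝ) (ε₁ : ℝ) (hε₁ : 0 < ε₁)
    (hsol : ∀ ε ∈ Set.Ioc (0:ℝ) ε₁,
      (∀ t ∈ Set.Icc (0:ℝ) 1, HasDerivWithinAt (x ε) (x' ε t) (Set.Icc (0:ℝ) 1) t) ∧
      (∀ t ∈ Set.Icc (0:ℝ) 1, HasDerivWithinAt (x' ε) (x'' ε t) (Set.Icc (0:ℝ) 1) t) ∧
      ContinuousOn (x' ε) (Set.Icc (0:ℝ) 1) ∧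
      ContinuousOn (x'' ε) (Set.Icc (0:ℝ) 1) ∧
      (∀ t ∈ Set.Icc (0:ℝ) 1,
        x'' ε t = ε ^ 2 * (p * x ε t + B t (x ε t) + f t)) ∧
      x ε 0 = 0 ∧ x ε 1 = 0) :
    Tendsto
      (fun ε : ℝ => ⨆ t : Set.Icc (0:ℝ) 1, |ε⁻¹ ^ 2 * x ε t - κ t|)
      (nhdsWithin 0 (Set.Ioi 0)) (nhds 0) :=
  dirichlet_averaging_limit_general p β hp f hf B hBcont B' hBderiv hB'bd κ hκ x x' x'' ε₁ hε₁ hsol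
end
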